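/- arXiv:1708.08493 — 8 statements merged into one kernel-verified Lean document; each statement's English description precedes it below -/
import Mathlib

section
/- Let n ≥ 3, let C_n be the cycle graph on vertex set ℤ/nℤ (i adjacent to i±1 mod n), and let P_{n−1} be the path graph on {0,1,…,n−2} (k adjacent to k+1). For i ∈ ℤ/nℤ define φ_i(j) = ((j − i − 1) mod n) for j ≠ i; φ_i is a graph isomorphism from C_n − i onto P_{n−1}. Then for every nonempty S ⊆ ℤ/nℤ, |P(S;C_n)| = Σ_{i ∈ S} |P(φ_i(S∖{i}); P_{n−1})|. -/
open SimpleGraph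

/-- A vertex `v` is a peak of the labeling `ℓ` of the graph `G` if `v` has degree at least 2
and the label of `v` is larger than the labels of all its neighbors. -/
def IsPeak {V : Type*} {n : ℕ} (G : SimpleGraph V) (ℓ : V ≃ Fin n) (v : V) : Prop :=
  2 ≤ (G.neighborSet v).ncard ∧ ∀ w, G.Adj v w → ℓ w < ℓ v

/-- The peak set of a labeling `ℓ` of the graph `G`. -/
def peakSet {V : Type*} {n : ℕ} (G : SimpleGraph V) (ℓ : V ≃ Fin n) : Set V :=
  {v | IsPeak G ℓ v}

/-- `P(S;G)`: the set of labelings of `G` (bijections from `V(G)` to `{1,…,n}`,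
here realized as equivalences `V ≃ Fin n` with `n = |V(G)|`) whose peak set is exactly `S`. -/
def peakLabelings {V : Type*} [Fintype V] (G : SimpleGraph V) (S : Set V) :
    Set (V ≃ Fin (Fintype.card V)) :=
  {ℓ | peakSet G ℓ = S}

/-- The join of two simple graphs: keep all edges of both graphs and connect every vertex of
the first graph with every vertex of the second graph. -/
def graphJoin {V₁ V₂ : Type*} (G₁ : SimpleGraph V₁) (G₂ : SimpleGraph V₂) :
    SimpleGraph (V₁ ⊕ V₂) where
  Adj a b :=
    match a, b with
    | Sum.inl u, Sum.inl v => G₁.Adj u v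
    | Sum.inr u, Sum.inr v => G₂.Adj u v
    | Sum.inl _, Sum.inr _ => True
    | Sum.inr _, Sum.inl _ => True
  symm := ⟨by rintro (a | a) (b | b) h <;> first | trivial | exact h.symm⟩
  loopless := ⟨by
    rintro (a | a) h
    exacts [G₁.loopless.irrefl _ h, G₂.loopless.irrefl _ h]⟩

/-- The cycle graph on `ℤ/nℤ`: `i` is adjacent to `i ± 1 (mod n)`. -/
def cycleZMod (n : ℕ) : SimpleGraph (ZMod n) where
  Adj i j := i ≠ j ∧ (i - j = 1 ∨ j - i = 1)
  symm := ⟨fun _ _ h => ⟨h.1.symm, h.2.symm⟩⟩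
  loopless := ⟨fun _ h => h.1 rfl⟩

/-- The path graph on `{0, 1, …, n-1}`: `k` is adjacent to `k + 1`. -/
def pathGraph' (n : ℕ) : SimpleGraph (Fin n) where
  Adj a b := (a : ℕ) + 1 = (b : ℕ) ∨ (b : ℕ) + 1 = (a : ℕ)
  symm := ⟨fun _ _ h => h.symm⟩
  loopless := ⟨fun a h => by omega⟩

set_option maxHeartbeats 1000000
namespace CPP

variable {n : ℕ}

lemma natcast_ne_zero [NeZero n] {a : ℕ} (h0 : 0 < a) (h1 : a < n) : ((a : ℕ) : ZMod n) ≠ 0 := by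
  rw [Ne, ZMod.natCast_eq_zero_iff]
  intro h
  have := Nat.le_of_dvd h0 h
  omega

lemma one_ne_zero' [NeZero n] (hn : 3 ≤ n) : (1 : ZMod n) ≠ 0 := by
  have := natcast_ne_zero (n := n) (a := 1) one_pos (by omega)
  simpa using this

lemma two_ne_zero' [NeZero n] (hn : 3 ≤ n) : (2 : ZMod n) ≠ 0 := by
  have := natcast_ne_zero (n := n) (a := 2) (by omega) (by omega)
  simpa using this

/-- the `k`-th vertex of the path obtained by deleting `i` from the cycle. -/
def cyc (i : ZMod n) (k : Fin (n - 1)) : ZMod n := i + 1 + ((k : ℕ) : ZMod n)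

lemma cyc_ne [NeZero n] (i : ZMod n) (k : Fin (n - 1)) : cyc i k ≠ i := by
  intro h
  have h2 : (((k : ℕ) + 1 : ℕ) : ZMod n) = 0 := by
    push_cast
    unfold cyc at h
    linear_combination h
  exact natcast_ne_zero (by omega) (by have := k.isLt; omega) h2

lemma dlt [NeZero n] (hn : 3 ≤ n) {i j : ZMod n} (h : j ≠ i) : (j - i - 1).val < n - 1 := by
  have hv := (j - i - 1).val_lt
  by_contra h'
  have hval : (j - i - 1).val = n - 1 := by omega
  have h2 : j - i - 1 = ((n - 1 : ℕ) : ZMod n) := by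
    rw [← hval, ZMod.natCast_zmod_val]
  have h3 : ((n - 1 : ℕ) : ZMod n) = -1 := by
    rw [Nat.cast_sub (by omega : 1 ≤ n), ZMod.natCast_self]
    ring
  apply h
  linear_combination h2.trans h3

lemma dval_cyc [NeZero n] (i : ZMod n) (k : Fin (n - 1)) : (cyc i k - i - 1).val = (k : ℕ) := by
  have h : cyc i k - i - 1 = ((k : ℕ) : ZMod n) := by unfold cyc; ring
  rw [h, ZMod.val_cast_of_lt (by have := k.isLt; omega)]

lemma cyc_of_dval [NeZero n] (hn : 3 ≤ n) {i j : ZMod n} (h : j ≠ i) :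
    cyc i ⟨(j - i - 1).val, dlt hn h⟩ = j := by
  show i + 1 + (((j - i - 1).val : ℕ) : ZMod n) = j
  rw [ZMod.natCast_zmod_val]
  ring

lemma cyc_inj [NeZero n] (i : ZMod n) : Function.Injective (cyc i) := by
  intro k k' h
  have h2 : (((k : ℕ) : ℕ) : ZMod n) = ((k' : ℕ) : ZMod n) := by
    unfold cyc at h; push_cast; linear_combination h
  have := k.isLt; have := k'.isLt
  have h3 : ((k : ℕ) : ZMod n).val = ((k' : ℕ) : ZMod n).val := by rw [h2]
  rw [ZMod.val_cast_of_lt (by omega), ZMod.val_cast_of_lt (by omega)] at h3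
  exact Fin.ext h3

lemma cyc_surj [NeZero n] (hn : 3 ≤ n) {i j : ZMod n} (h : j ≠ i) : ∃ k, cyc i k = j :=
  ⟨⟨(j - i - 1).val, dlt hn h⟩, cyc_of_dval hn h⟩

lemma cycle_adj [NeZero n] (hn : 3 ≤ n) (v w : ZMod n) :
    (cycleZMod n).Adj v w ↔ w = v - 1 ∨ w = v + 1 := by
  show v ≠ w ∧ (v - w = 1 ∨ w - v = 1) ↔ _
  constructor
  · rintro ⟨hne, h | h⟩
    · left; linear_combination -h
    · right; linear_combination h
  · rintro (rfl | rfl)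
    · exact ⟨fun h => one_ne_zero' hn (by linear_combination h), Or.inl (by ring)⟩
    · exact ⟨fun h => one_ne_zero' hn (by linear_combination -h), Or.inr (by ring)⟩

lemma cycle_nbhd [NeZero n] (hn : 3 ≤ n) (v : ZMod n) :
    (cycleZMod n).neighborSet v = {v - 1, v + 1} := by
  ext w
  simp [SimpleGraph.mem_neighborSet, cycle_adj hn, Set.mem_insert_iff]

lemma cycle_deg [NeZero n] (hn : 3 ≤ n) (v : ZMod n) :
    ((cycleZMod n).neighborSet v).ncard = 2 := by
  rw [cycle_nbhd hn]
  exact Set.ncard_pair (fun h => two_ne_zero' hn (by linear_combination -h))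

lemma path_adj {m : ℕ} (a b : Fin m) :
    (pathGraph' m).Adj a b ↔ ((a : ℕ) + 1 = (b : ℕ) ∨ (b : ℕ) + 1 = (a : ℕ)) := Iff.rfl

lemma path_deg_ge {m : ℕ} (k : Fin m) (h0 : 0 < (k : ℕ)) (h1 : (k : ℕ) + 1 < m) :
    2 ≤ ((pathGraph' m).neighborSet k).ncard := by
  have h2 : 1 < ((pathGraph' m).neighborSet k).ncard := by
    rw [Set.one_lt_ncard (Set.toFinite _)]
    refine ⟨⟨(k : ℕ) - 1, by omega⟩, ?_, ⟨(k : ℕ) + 1, h1⟩, ?_, ?_⟩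
    · show (k : ℕ) + 1 = ((k : ℕ) - 1) ∨ ((k : ℕ) - 1) + 1 = (k : ℕ)
      omega
    · show (k : ℕ) + 1 = ((k : ℕ) + 1) ∨ _
      left; rfl
    · intro h
      have h2 : (k : ℕ) - 1 = (k : ℕ) + 1 := congrArg Fin.val h
      omega
  omega

lemma path_not_peak_end {m : ℕ} (k : Fin m) (h : (k : ℕ) = 0 ∨ (k : ℕ) + 1 = m) :
    ¬ 2 ≤ ((pathGraph' m).neighborSet k).ncard := by
  have hsub : ((pathGraph' m).neighborSet k).ncard ≤ 1 := by
    rw [Set.ncard_le_one (Set.toFinite _)]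
    intro a ha b hb
    have ha' : (k : ℕ) + 1 = (a : ℕ) ∨ (a : ℕ) + 1 = (k : ℕ) := ha
    have hb' : (k : ℕ) + 1 = (b : ℕ) ∨ (b : ℕ) + 1 = (k : ℕ) := hb
    have := a.isLt; have := b.isLt
    apply Fin.ext
    omega
  omega

variable [NeZero n]

lemma fin_lt_of_ne_top (hn : 3 ≤ n) {a : Fin n} (h : a ≠ ⟨n - 1, by omega⟩) : (a : ℕ) < n - 1 := by
  have := a.isLt
  rcases Nat.lt_or_ge (a : ℕ) (n - 1) with h' | h'
  · exact h'
  · exact absurd (Fin.ext (by omega : (a : ℕ) = n - 1)) h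

lemma castLE_mk {m n' : ℕ} (h : m ≤ n') (x : Fin n') (p : (x : ℕ) < m) :
    Fin.castLE h ⟨(x : ℕ), p⟩ = x := rfl

/-- the labeling of the cycle obtained from a labeling `g` of the path by putting the top
label on `i`. -/
def up (hn : 3 ≤ n) (i : ZMod n) (g : Fin (n - 1) ≃ Fin (n - 1)) : ZMod n ≃ Fin n where
  toFun j :=
    if h : j = i then ⟨n - 1, by omega⟩
    else ⟨(g ⟨(j - i - 1).val, dlt hn h⟩ : ℕ), by
      have := (g ⟨(j - i - 1).val, dlt hn h⟩).isLt; omega⟩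
  invFun a :=
    if h : (a : ℕ) = n - 1 then i
    else cyc i (g.symm ⟨(a : ℕ), by have := a.isLt; omega⟩)
  left_inv j := by
    beta_reduce
    by_cases h : j = i
    · subst h; rw [dif_pos rfl, dif_pos rfl]
    · rw [dif_neg h]
      have hlt := (g ⟨(j - i - 1).val, dlt hn h⟩).isLt
      rw [dif_neg (by simpa using (by omega : ((g ⟨(j - i - 1).val, dlt hn h⟩ : Fin (n-1)) : ℕ) ≠ n - 1))]
      simp only [Fin.eta, Equiv.symm_apply_apply]
      exact cyc_of_dval hn h
  right_inv a := by
    beta_reduce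
    by_cases h : (a : ℕ) = n - 1
    · rw [dif_pos h, dif_pos rfl]; exact Fin.ext h.symm
    · rw [dif_neg h, dif_neg (cyc_ne i _)]
      apply Fin.ext
      show ((g ⟨(cyc i (g.symm ⟨(a : ℕ), _⟩) - i - 1).val, _⟩ : Fin (n - 1)) : ℕ) = (a : ℕ)
      have e1 : (⟨(cyc i (g.symm ⟨(a : ℕ), by have := a.isLt; omega⟩) - i - 1).val,
          dlt hn (cyc_ne i _)⟩ : Fin (n - 1)) = g.symm ⟨(a : ℕ), by have := a.isLt; omega⟩ :=
        Fin.ext (dval_cyc i _)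
      rw [e1, Equiv.apply_symm_apply]

lemma up_apply_i (hn : 3 ≤ n) (i : ZMod n) (g : Fin (n - 1) ≃ Fin (n - 1)) :
    up hn i g i = ⟨n - 1, by omega⟩ := dif_pos rfl

lemma up_apply_cyc_val (hn : 3 ≤ n) (i : ZMod n) (g : Fin (n - 1) ≃ Fin (n - 1))
    (k : Fin (n - 1)) : ((up hn i g (cyc i k)) : ℕ) = (g k : ℕ) := by
  show ((dite _ _ _ : Fin n) : ℕ) = _
  rw [dif_neg (cyc_ne i k)]
  exact congrArg (fun x => ((g x : Fin (n - 1)) : ℕ)) (Fin.ext (dval_cyc i k))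

lemma up_val_lt (hn : 3 ≤ n) (i : ZMod n) (g : Fin (n - 1) ≃ Fin (n - 1)) {j : ZMod n}
    (h : j ≠ i) : ((up hn i g j) : ℕ) < n - 1 := by
  show ((dite _ _ _ : Fin n) : ℕ) < n - 1
  rw [dif_neg h]
  exact (g _).isLt

lemma up_inj (hn : 3 ≤ n) (i : ZMod n) : Function.Injective (up (n := n) hn i) := by
  intro g g' h
  apply Equiv.ext; intro k
  apply Fin.ext
  rw [← up_apply_cyc_val hn i g k, ← up_apply_cyc_val hn i g' k, h]

/-- the labeling of the path induced by a labeling of the cycle with top label at `i`. -/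
def down (hn : 3 ≤ n) (i : ZMod n) (ℓ : ZMod n ≃ Fin n) (hℓ : ℓ i = ⟨n - 1, by omega⟩) :
    Fin (n - 1) ≃ Fin (n - 1) where
  toFun k := ⟨(ℓ (cyc i k) : ℕ), by
    refine fin_lt_of_ne_top hn ?_
    rw [← hℓ]
    exact fun h => cyc_ne i k (ℓ.injective h)⟩
  invFun a := ⟨(ℓ.symm (Fin.castLE (by omega) a) - i - 1).val, by
    apply dlt hn
    intro h
    have h2 : Fin.castLE (by omega : n - 1 ≤ n) a = ⟨n - 1, by omega⟩ := by
      rw [← hℓ, ← h, Equiv.apply_symm_apply]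
    have h3 : (a : ℕ) = n - 1 := congrArg Fin.val h2
    have := a.isLt; omega⟩
  left_inv k := by
    apply Fin.ext
    show (ℓ.symm (Fin.castLE _ ⟨(ℓ (cyc i k) : ℕ), _⟩) - i - 1).val = (k : ℕ)
    rw [castLE_mk, Equiv.symm_apply_apply, dval_cyc]
  right_inv a := by
    apply Fin.ext
    have h1 : ℓ.symm (Fin.castLE (by omega : n - 1 ≤ n) a) ≠ i := by
      intro h
      have h2 : Fin.castLE (by omega : n - 1 ≤ n) a = ⟨n - 1, by omega⟩ := by
        rw [← hℓ, ← h, Equiv.apply_symm_apply]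
      have h3 : (a : ℕ) = n - 1 := congrArg Fin.val h2
      have := a.isLt; omega
    show (ℓ (cyc i ⟨(ℓ.symm (Fin.castLE _ a) - i - 1).val, _⟩) : ℕ) = (a : ℕ)
    rw [cyc_of_dval hn h1, Equiv.apply_symm_apply]
    rfl

lemma up_down (hn : 3 ≤ n) (i : ZMod n) (ℓ : ZMod n ≃ Fin n)
    (hℓ : ℓ i = ⟨n - 1, by omega⟩) : up hn i (down hn i ℓ hℓ) = ℓ := by
  apply Equiv.ext; intro j
  by_cases h : j = i
  · subst h; rw [up_apply_i, hℓ]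
  · obtain ⟨k, rfl⟩ := cyc_surj hn h
    apply Fin.ext
    rw [up_apply_cyc_val]
    rfl

lemma up_lt_iff (hn : 3 ≤ n) (i : ZMod n) (g : Fin (n - 1) ≃ Fin (n - 1)) (k k' : Fin (n - 1)) :
    up hn i g (cyc i k') < up hn i g (cyc i k) ↔ g k' < g k := by
  rw [Fin.lt_def, up_apply_cyc_val, up_apply_cyc_val, ← Fin.lt_def]

lemma cyc_succ (i : ZMod n) (k : Fin (n - 1)) (h1 : (k : ℕ) + 1 < n - 1) :
    cyc i k + 1 = cyc i ⟨(k : ℕ) + 1, h1⟩ := by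
  unfold cyc; push_cast; ring

lemma cyc_pred (i : ZMod n) (k : Fin (n - 1)) (h0 : 0 < (k : ℕ)) :
    cyc i k - 1 = cyc i ⟨(k : ℕ) - 1, by have := k.isLt; omega⟩ := by
  unfold cyc
  rw [Nat.cast_sub (by omega : 1 ≤ (k : ℕ))]
  push_cast; ring

lemma cyc_zero (i : ZMod n) {k : Fin (n - 1)} (h0 : (k : ℕ) = 0) : cyc i k = i + 1 := by
  unfold cyc; rw [h0]; push_cast; ring

lemma cyc_last (hn : 3 ≤ n) (i : ZMod n) {k : Fin (n - 1)} (h1 : (k : ℕ) + 1 = n - 1) :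
    cyc i k = i - 1 := by
  unfold cyc
  have h2 : (k : ℕ) = n - 2 := by omega
  rw [h2, Nat.cast_sub (by omega : 2 ≤ n), ZMod.natCast_self]
  push_cast; ring

lemma peak_up (hn : 3 ≤ n) (i : ZMod n) (g : Fin (n - 1) ≃ Fin (n - 1)) :
    peakSet (cycleZMod n) (up hn i g) =
      insert i (cyc i '' peakSet (pathGraph' (n - 1)) g) := by
  ext j
  by_cases hj : j = i
  · subst hj
    simp only [Set.mem_insert_iff, true_or, iff_true]
    refine ⟨by rw [cycle_deg hn], ?_⟩
    intro w hw
    rw [up_apply_i, Fin.lt_def]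
    exact up_val_lt hn j g hw.ne'
  · obtain ⟨k, rfl⟩ := cyc_surj hn hj
    have hmem : cyc i k ∈ insert i (cyc i '' peakSet (pathGraph' (n - 1)) g) ↔
        k ∈ peakSet (pathGraph' (n - 1)) g := by
      simp only [Set.mem_insert_iff, Set.mem_image]
      constructor
      · rintro (h | ⟨k', hk', hkk⟩)
        · exact absurd h (cyc_ne i k)
        · rwa [cyc_inj i hkk] at hk'
      · exact fun h => Or.inr ⟨k, h, rfl⟩
    rw [hmem]
    have hnotpeak : (cycleZMod n).Adj (cyc i k) i →
        ¬ ((cyc i k) ∈ peakSet (cycleZMod n) (up hn i g)) := by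
      intro hadj hpk
      have h2 := hpk.2 i hadj
      rw [up_apply_i, Fin.lt_def] at h2
      have h3 := up_val_lt hn i g (cyc_ne i k)
      have h4 : ((⟨n - 1, by omega⟩ : Fin n) : ℕ) = n - 1 := rfl
      omega
    by_cases h0 : (k : ℕ) = 0
    · constructor
      · intro hpk
        exfalso
        refine hnotpeak ?_ hpk
        rw [cycle_adj hn]
        left
        rw [cyc_zero i h0]; ring
      · rintro ⟨hdeg, -⟩
        exact absurd hdeg (path_not_peak_end k (Or.inl h0))
    · by_cases h1 : (k : ℕ) + 1 = n - 1
      · constructor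
        · intro hpk
          exfalso
          refine hnotpeak ?_ hpk
          rw [cycle_adj hn]
          right
          rw [cyc_last hn i h1]; ring
        · rintro ⟨hdeg, -⟩
          exact absurd hdeg (path_not_peak_end k (Or.inr h1))
      · have hk1 : (k : ℕ) + 1 < n - 1 := by have := k.isLt; omega
        have hk0 : 0 < (k : ℕ) := by omega
        have hadjsucc : (cycleZMod n).Adj (cyc i k) (cyc i ⟨(k : ℕ) + 1, hk1⟩) := by
          rw [cycle_adj hn]
          right
          rw [cyc_succ i k hk1]
        have hadjpred : (cycleZMod n).Adj (cyc i k) (cyc i ⟨(k : ℕ) - 1, by have := k.isLt; omega⟩) := by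
          rw [cycle_adj hn]
          left
          rw [cyc_pred i k hk0]
        constructor
        · rintro ⟨-, hpk⟩
          refine ⟨path_deg_ge k hk0 hk1, ?_⟩
          intro w hw
          rcases (path_adj k w).mp hw with hw' | hw'
          · have hwe : w = ⟨(k : ℕ) + 1, hk1⟩ := Fin.ext hw'.symm
            rw [hwe]
            exact (up_lt_iff hn i g k _).mp (hpk _ hadjsucc)
          · have hwe : w = ⟨(k : ℕ) - 1, by have := k.isLt; omega⟩ :=
              Fin.ext (by show (w : ℕ) = (k : ℕ) - 1; omega)
            rw [hwe]
            exact (up_lt_iff hn i g k _).mp (hpk _ hadjpred)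
        · rintro ⟨-, hpk⟩
          refine ⟨by rw [cycle_deg hn], ?_⟩
          intro w hw
          rw [cycle_adj hn] at hw
          rcases hw with rfl | rfl
          · rw [cyc_pred i k hk0]
            refine (up_lt_iff hn i g k _).mpr (hpk _ ?_)
            exact Or.inr (by show ((⟨(k : ℕ) - 1, _⟩ : Fin (n - 1)) : ℕ) + 1 = (k : ℕ); simp; omega)
          · rw [cyc_succ i k hk1]
            refine (up_lt_iff hn i g k _).mpr (hpk _ ?_)
            exact Or.inl rfl

lemma T_iff (hn : 3 ≤ n) (i : ZMod n) (S : Finset (ZMod n)) (k : Fin (n - 1)) :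
    (∃ j ∈ S, j ≠ i ∧ (j - i - 1).val = (k : ℕ)) ↔ cyc i k ∈ S := by
  constructor
  · rintro ⟨j, hj, hne, hval⟩
    have h1 : (⟨(j - i - 1).val, dlt hn hne⟩ : Fin (n - 1)) = k := Fin.ext hval
    have h2 := cyc_of_dval hn hne
    rw [h1] at h2
    rwa [h2]
  · intro h
    exact ⟨cyc i k, h, cyc_ne i k, dval_cyc i k⟩

lemma insert_iff (hn : 3 ≤ n) {i : ZMod n} {S : Finset (ZMod n)} (hi : i ∈ S)
    (pk : Set (Fin (n - 1))) :
    insert i (cyc i '' pk) = (↑S : Set (ZMod n)) ↔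
      pk = {k : Fin (n - 1) | ∃ j ∈ S, j ≠ i ∧ (j - i - 1).val = (k : ℕ)} := by
  constructor
  · intro h
    ext k
    rw [Set.mem_setOf_eq, T_iff hn i S k]
    constructor
    · intro hk
      have : cyc i k ∈ insert i (cyc i '' pk) := Or.inr ⟨k, hk, rfl⟩
      rw [h] at this
      exact this
    · intro hk
      have : cyc i k ∈ insert i (cyc i '' pk) := by rw [h]; exact hk
      rcases this with h' | ⟨k', hk', heq⟩
      · exact absurd h' (cyc_ne i k)
      · rwa [cyc_inj i heq] at hk'
  · intro h
    subst h
    ext j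
    simp only [Set.mem_insert_iff, Set.mem_image, Finset.mem_coe]
    constructor
    · rintro (rfl | ⟨k, hk, rfl⟩)
      · exact hi
      · exact (T_iff hn i S k).mp hk
    · intro hj
      by_cases hji : j = i
      · exact Or.inl hji
      · obtain ⟨k, rfl⟩ := cyc_surj hn hji
        exact Or.inr ⟨k, (T_iff hn i S k).mpr hj, rfl⟩

lemma peakSet_cast {V : Type*} {m₁ m₂ : ℕ} (G : SimpleGraph V) (h : m₁ = m₂) (ℓ : V ≃ Fin m₁) :
    peakSet G (ℓ.trans (finCongr h)) = peakSet G ℓ := by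
  subst h
  ext v
  simp only [peakSet, IsPeak, Set.mem_setOf_eq, Equiv.trans_apply]
  constructor
  · rintro ⟨hd, hp⟩
    exact ⟨hd, fun w hw => by have := hp w hw; rwa [Fin.lt_def] at this ⊢⟩
  · rintro ⟨hd, hp⟩
    exact ⟨hd, fun w hw => by have := hp w hw; rw [Fin.lt_def] at this ⊢; exact this⟩

lemma ncard_peakLabelings_cast {V : Type*} [Fintype V] [DecidableEq V] (G : SimpleGraph V)
    (Sv : Set V) {m : ℕ} (h : Fintype.card V = m) :
    (peakLabelings G Sv).ncard = {ℓ : V ≃ Fin m | peakSet G ℓ = Sv}.ncard := by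
  have himg : {ℓ : V ≃ Fin m | peakSet G ℓ = Sv} =
      (fun ℓ : V ≃ Fin (Fintype.card V) => ℓ.trans (finCongr h)) '' (peakLabelings G Sv) := by
    ext ℓ'
    simp only [Set.mem_setOf_eq, Set.mem_image]
    constructor
    · intro hp
      refine ⟨ℓ'.trans (finCongr h.symm), ?_, ?_⟩
      · show peakSet G _ = Sv
        rw [peakSet_cast G h.symm ℓ', hp]
      · exact Equiv.ext fun v => Fin.ext rfl
    · rintro ⟨ℓ, hp, rfl⟩
      rw [peakSet_cast G h ℓ]
      exact hp
  rw [himg, Set.ncard_image_of_injective]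
  intro a b hab
  apply Equiv.ext
  intro v
  have h2 := congrArg (fun e : V ≃ Fin m => (e v : ℕ)) hab
  exact Fin.ext h2

end CPP

/-- For `n ≥ 3`, the cycle graph on `ℤ/nℤ`, and every nonempty `S ⊆ ℤ/nℤ`,
`|P(S;C_n)| = Σ_{i ∈ S} |P(φ_i(S∖{i}); P_{n−1})|`, where `φ_i(j) = (j − i − 1) mod n`. -/
theorem cycle_peak_count_via_paths (n : ℕ) [NeZero n] (hn : 3 ≤ n)
    (S : Finset (ZMod n)) (hS : S.Nonempty) :
    (peakLabelings (cycleZMod n) (↑S : Set (ZMod n))).ncard =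
      ∑ i ∈ S,
        (peakLabelings (pathGraph' (n - 1))
          {k : Fin (n - 1) | ∃ j ∈ S, j ≠ i ∧ (j - i - 1).val = (k : ℕ)}).ncard := by
  classical
  rw [CPP.ncard_peakLabelings_cast (cycleZMod n) _ (ZMod.card n)]
  have hpath : ∀ i : ZMod n,
      (peakLabelings (pathGraph' (n - 1))
          {k : Fin (n - 1) | ∃ j ∈ S, j ≠ i ∧ (j - i - 1).val = (k : ℕ)}).ncard =
        {g : Fin (n - 1) ≃ Fin (n - 1) | peakSet (pathGraph' (n - 1)) g =
          {k : Fin (n - 1) | ∃ j ∈ S, j ≠ i ∧ (j - i - 1).val = (k : ℕ)}}.ncard :=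
    fun i => CPP.ncard_peakLabelings_cast _ _ (Fintype.card_fin (n - 1))
  simp_rw [hpath]
  have hmemtop : ∀ ℓ : ZMod n ≃ Fin n, peakSet (cycleZMod n) ℓ = ↑S →
      (ℓ.symm ⟨n - 1, by omega⟩) ∈ S := by
    intro ℓ hℓ
    have hpk : ℓ.symm ⟨n - 1, by omega⟩ ∈ peakSet (cycleZMod n) ℓ := by
      refine ⟨by rw [CPP.cycle_deg hn], ?_⟩
      intro w hw
      have hwne : w ≠ ℓ.symm ⟨n - 1, by omega⟩ := hw.ne'
      have h1 : ℓ w ≠ ⟨n - 1, by omega⟩ := by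
        intro h
        exact hwne (by rw [← h, Equiv.symm_apply_apply])
      rw [Equiv.apply_symm_apply, Fin.lt_def]
      exact CPP.fin_lt_of_ne_top hn h1
    rw [hℓ] at hpk
    exact Finset.mem_coe.mp hpk
  have hAfin : ∀ i : ZMod n, ({ℓ : ZMod n ≃ Fin n |
      peakSet (cycleZMod n) ℓ = ↑S ∧ ℓ i = ⟨n - 1, by omega⟩}).Finite := fun i => Set.toFinite _
  have hLfin : ({ℓ : ZMod n ≃ Fin n | peakSet (cycleZMod n) ℓ = ↑S}).Finite := Set.toFinite _
  have hunion : hLfin.toFinset = S.biUnion (fun i => (hAfin i).toFinset) := by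
    ext ℓ
    simp only [Set.Finite.mem_toFinset, Finset.mem_biUnion, Set.mem_setOf_eq]
    constructor
    · intro hℓ
      exact ⟨ℓ.symm ⟨n - 1, by omega⟩, hmemtop ℓ hℓ, hℓ, Equiv.apply_symm_apply ℓ _⟩
    · rintro ⟨i, -, hℓ, -⟩
      exact hℓ
  have hdisj : ∀ i ∈ S, ∀ j ∈ S, i ≠ j →
      Disjoint ((hAfin i).toFinset) ((hAfin j).toFinset) := by
    intro i _ j _ hij
    rw [Finset.disjoint_left]
    intro ℓ h1 h2
    rw [Set.Finite.mem_toFinset, Set.mem_setOf_eq] at h1 h2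
    exact hij (ℓ.injective (h1.2.trans h2.2.symm))
  rw [Set.ncard_eq_toFinset_card _ hLfin, hunion, Finset.card_biUnion hdisj]
  refine Finset.sum_congr rfl ?_
  intro i hi
  rw [← Set.ncard_eq_toFinset_card _ (hAfin i)]
  have himg : {ℓ : ZMod n ≃ Fin n | peakSet (cycleZMod n) ℓ = ↑S ∧ ℓ i = ⟨n - 1, by omega⟩} =
      CPP.up hn i '' {g : Fin (n - 1) ≃ Fin (n - 1) | peakSet (pathGraph' (n - 1)) g =
        {k : Fin (n - 1) | ∃ j ∈ S, j ≠ i ∧ (j - i - 1).val = (k : ℕ)}} := by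
    ext ℓ
    simp only [Set.mem_image, Set.mem_setOf_eq]
    constructor
    · rintro ⟨hpk, htop⟩
      refine ⟨CPP.down hn i ℓ htop, ?_, CPP.up_down hn i ℓ htop⟩
      have h1 := CPP.peak_up hn i (CPP.down hn i ℓ htop)
      rw [CPP.up_down hn i ℓ htop, hpk] at h1
      exact (CPP.insert_iff hn hi _).mp h1.symm
    · rintro ⟨g, hg, rfl⟩
      refine ⟨?_, CPP.up_apply_i hn i g⟩
      rw [CPP.peak_up hn i g, hg]
      exact (CPP.insert_iff hn hi _).mpr rfl
  rw [himg, Set.ncard_image_of_injective _ (CPP.up_inj hn i)]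
end

section
/- Let G be a finite simple graph with |V(G)| > 1, let n ≥ 1, let G' = K̄_n ∨ G, and let S ⊆ V(K̄_n) be nonempty. Then S is G'-admissible and |P(S;G')| = |S|! · |V(G)| · (|V(G')| − |S| − 1)!, where |V(G')| = n + |V(G)|. -/
open SimpleGraph

section AuxCounting

variable {α β : Type*}

/-- The restriction of an equivalence mapping `s` onto `t`. -/
def myRestrict (s : Set α) (t : Set β) (q : (α ≃ β) → Prop)
    (x : {e : α ≃ β // (∀ a, a ∈ s ↔ e a ∈ t) ∧ q e}) : s ≃ t :=
  Equiv.subtypeEquiv x.1 x.2.1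

/-- Decompose equivalences mapping `s` onto `t` (with an extra property `q`) as a sigma over
the induced equivalence `s ≃ t`. -/
def mySigmaEquiv (s : Set α) (t : Set β) (q : (α ≃ β) → Prop) :
    {e : α ≃ β // (∀ a, a ∈ s ↔ e a ∈ t) ∧ q e} ≃
      Σ g : s ≃ t, {e : α ≃ β // (∀ x : s, e x = g x) ∧ q e} :=
  (Equiv.sigmaFiberEquiv (myRestrict s t q)).symm.trans <|
    Equiv.sigmaCongrRight fun g =>
    { toFun := fun x => ⟨x.1.1, fun z => by
        have h := congrArg (fun e : (s ≃ t) => ((e z : t) : β)) x.2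
        exact h, x.1.2.2⟩
      invFun := fun e => ⟨⟨e.1, ⟨fun a => by
          constructor
          · intro ha
            rw [e.2.1 ⟨a, ha⟩]
            exact (g ⟨a, ha⟩).2
          · intro ht
            obtain ⟨x, hx⟩ : ∃ x : s, (g x : β) = e.1 a := ⟨g.symm ⟨e.1 a, ht⟩, by simp⟩
            have hxx : e.1 x = e.1 a := by rw [e.2.1 x, hx]
            have := e.1.injective hxx
            rw [← this]; exact x.2, e.2.2⟩⟩, by
        apply Equiv.ext
        intro z
        exact Subtype.ext (e.2.1 z)⟩
      left_inv := fun x => Subtype.ext (Subtype.ext rfl)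
      right_inv := fun e => Subtype.ext rfl }

/-- Fibering a subtype condition through a map. -/
def myFiberEquiv {γ δ : Type*} (f : γ → δ) (q : δ → Prop) :
    {a : γ // q (f a)} ≃ Σ d : {d : δ // q d}, {a : γ // f a = d.1} where
  toFun a := ⟨⟨f a.1, a.2⟩, ⟨a.1, rfl⟩⟩
  invFun z := ⟨z.2.1, by rw [z.2.2]; exact z.1.2⟩
  left_inv a := rfl
  right_inv := by
    rintro ⟨⟨d, hd⟩, ⟨a, ha⟩⟩
    have ha' : f a = d := ha
    subst ha'
    rfl

lemma myCardFixpoint {X Y : Type*} [Fintype X] [Fintype Y]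
    (hXY : Fintype.card X = Fintype.card Y) (x₀ : X) (y₀ : Y) :
    Nat.card {h : X ≃ Y // h x₀ = y₀} = (Fintype.card X - 1).factorial := by
  classical
  let e₀ : (({x₀} : Set X)) ≃ (({y₀} : Set Y)) :=
    { toFun := fun _ => ⟨y₀, rfl⟩
      invFun := fun _ => ⟨x₀, rfl⟩
      left_inv := fun z => Subtype.ext z.2.symm
      right_inv := fun z => Subtype.ext z.2.symm }
  have E1 : {h : X ≃ Y // h x₀ = y₀} ≃ {h : X ≃ Y // ∀ z : ({x₀} : Set X), h z = e₀ z} := by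
    refine Equiv.subtypeEquivRight fun h => ?_
    constructor
    · intro hh z
      have hz : (z : X) = x₀ := z.2
      have he : ((e₀ z : ({y₀} : Set Y)) : Y) = y₀ := (e₀ z).2
      rw [hz, he, hh]
    · intro H
      exact H ⟨x₀, rfl⟩
  have E2 := Equiv.Set.compl e₀
  rw [Nat.card_congr (E1.trans E2), Nat.card_eq_fintype_card]
  have hcs : Fintype.card (({x₀}ᶜ : Set X)) = Fintype.card X - 1 := by
    rw [Fintype.card_compl_set]
    simp
  have hct : Fintype.card (({y₀}ᶜ : Set Y)) = Fintype.card Y - 1 := by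
    rw [Fintype.card_compl_set]
    simp
  rw [Fintype.card_equiv (Fintype.equivOfCardEq (by rw [hcs, hct, hXY])), hcs]

lemma myCardSymmMem {X Y : Type*} [Fintype X] [Fintype Y]
    (hXY : Fintype.card X = Fintype.card Y) (y₀ : Y) (q : X → Prop) :
    Nat.card {h : X ≃ Y // q (h.symm y₀)} =
      Nat.card {x : X // q x} * (Fintype.card X - 1).factorial := by
  classical
  rw [Nat.card_congr (myFiberEquiv (fun h : X ≃ Y => h.symm y₀) q)]
  rw [Nat.card_eq_fintype_card, Fintype.card_sigma]
  have key : ∀ d : {x : X // q x},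
      Fintype.card {h : X ≃ Y // h.symm y₀ = d.1} = (Fintype.card X - 1).factorial := by
    intro d
    rw [← Nat.card_eq_fintype_card]
    rw [Nat.card_congr (Equiv.subtypeEquivRight (fun h : X ≃ Y => by
      rw [Equiv.symm_apply_eq, eq_comm]))]
    exact myCardFixpoint hXY d.1 y₀
  rw [Finset.sum_congr rfl fun d _ => key d, Finset.sum_const, smul_eq_mul,
    Finset.card_univ, Nat.card_eq_fintype_card]

lemma myCardTwo {α β : Type*} [Fintype α] [Fintype β] (s : Set α) (t : Set β)
    (y₀ : β) (R : Set α) (hy₀ : y₀ ∉ t) (hR : ∀ a ∈ R, a ∉ s)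
    (hab : Fintype.card α = Fintype.card β) (hst : Nat.card s = Nat.card t) :
    Nat.card {e : α ≃ β // (∀ a, a ∈ s ↔ e a ∈ t) ∧ e.symm y₀ ∈ R} =
      (Nat.card s).factorial *
        (Nat.card R * (Fintype.card α - Nat.card s - 1).factorial) := by
  classical
  have hy₀' : y₀ ∈ (tᶜ : Set β) := hy₀
  have hcs : Fintype.card (sᶜ : Set α) = Fintype.card α - Nat.card s := by
    rw [Fintype.card_compl_set, Nat.card_eq_fintype_card]
  have hct : Fintype.card (tᶜ : Set β) = Fintype.card α - Nat.card s := by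
    rw [Fintype.card_compl_set, ← hab, hst, Nat.card_eq_fintype_card]
  have hW : Nat.card {h : (sᶜ : Set α) ≃ (tᶜ : Set β) //
      ((h.symm ⟨y₀, hy₀'⟩ : (sᶜ : Set α)) : α) ∈ R} =
      Nat.card R * (Fintype.card α - Nat.card s - 1).factorial := by
    have h1 := myCardSymmMem (X := (sᶜ : Set α)) (Y := (tᶜ : Set β)) (by rw [hcs, hct])
      ⟨y₀, hy₀'⟩ (fun x => (x : α) ∈ R)
    refine Eq.trans h1 ?_
    rw [hcs]
    congr 1
    refine Nat.card_congr ?_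
    refine (Equiv.subtypeSubtypeEquivSubtypeInter (· ∈ (sᶜ : Set α)) (· ∈ R)).trans
      (Equiv.subtypeEquivRight fun a => ?_)
    exact ⟨And.right, fun h => ⟨hR a h, h⟩⟩
  rw [Nat.card_congr (mySigmaEquiv s t (fun e => e.symm y₀ ∈ R)),
    Nat.card_eq_fintype_card, Fintype.card_sigma]
  have key : ∀ g : (s : Set α) ≃ t,
      Fintype.card {e : α ≃ β // (∀ x : s, e x = g x) ∧ e.symm y₀ ∈ R} =
        Nat.card R * (Fintype.card α - Nat.card s - 1).factorial := by
    intro g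
    rw [← Nat.card_eq_fintype_card, ← hW]
    refine Nat.card_congr ?_
    refine ((Equiv.subtypeSubtypeEquivSubtypeInter
      (fun e : α ≃ β => ∀ x : s, e x = g x) (fun e => e.symm y₀ ∈ R)).symm).trans ?_
    refine Equiv.subtypeEquiv (Equiv.Set.compl g) fun e' => ?_
    have hval : (((Equiv.Set.compl g e').symm ⟨y₀, hy₀'⟩ : (sᶜ : Set α)) : α)
        = e'.1.symm y₀ := rfl
    rw [hval]
  rw [Finset.sum_congr rfl fun g _ => key g, Finset.sum_const, smul_eq_mul, Finset.card_univ]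
  congr 1
  rw [Fintype.card_equiv (Fintype.equivOfCardEq
    (by rw [← Nat.card_eq_fintype_card, ← Nat.card_eq_fintype_card, hst])),
    Nat.card_eq_fintype_card]

end AuxCounting

section GraphJoinLemmas

variable {V₁ V₂ : Type*} (G₁ : SimpleGraph V₁) (G₂ : SimpleGraph V₂)

lemma gj_adj_inl_inl (a b : V₁) :
    (graphJoin G₁ G₂).Adj (Sum.inl a) (Sum.inl b) ↔ G₁.Adj a b := Iff.rfl

lemma gj_adj_inl_inr (a : V₁) (b : V₂) :
    (graphJoin G₁ G₂).Adj (Sum.inl a) (Sum.inr b) := trivial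

lemma gj_adj_inr_inl (a : V₁) (b : V₂) :
    (graphJoin G₁ G₂).Adj (Sum.inr b) (Sum.inl a) := trivial

lemma gj_nbr_inl {n : ℕ} {V : Type*} (G : SimpleGraph V) (a : Fin n) :
    (graphJoin (⊥ : SimpleGraph (Fin n)) G).neighborSet (Sum.inl a) = Set.range Sum.inr := by
  ext x
  cases x with
  | inl b =>
    simp only [SimpleGraph.mem_neighborSet]
    constructor
    · intro h
      exact absurd ((gj_adj_inl_inl _ _ _ _).1 h) (by simp)
    · rintro ⟨u, hu⟩
      exact absurd hu (by simp)
  | inr u =>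
    simp only [SimpleGraph.mem_neighborSet]
    exact ⟨fun _ => ⟨u, rfl⟩, fun _ => gj_adj_inl_inr _ _ _ _⟩

end GraphJoinLemmas

/-- for `|V(G)| > 1`, `n ≥ 1`, `G' = K̄_n ∨ G` and nonempty `S ⊆ V(K̄_n)`,
the set `S` is `G'`-admissible and `|P(S;G')| = |S|! ⬝ |V(G)| ⬝ (|V(G')| − |S| − 1)!`. -/
theorem null_join_peak_count {V : Type*} [Fintype V] (G : SimpleGraph V)
    (hV : 1 < Fintype.card V) (n : ℕ) (hn : 1 ≤ n)
    (S : Set (Fin n)) (hS : S.Nonempty) :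
    (peakLabelings (graphJoin (⊥ : SimpleGraph (Fin n)) G) (Sum.inl '' S)).Nonempty ∧
    (peakLabelings (graphJoin (⊥ : SimpleGraph (Fin n)) G) (Sum.inl '' S)).ncard =
      Nat.factorial S.ncard * Fintype.card V *
        Nat.factorial (n + Fintype.card V - S.ncard - 1) := by
  classical
  set G' := graphJoin (⊥ : SimpleGraph (Fin n)) G with hG'
  set N := Fintype.card (Fin n ⊕ V) with hN
  set m := Fintype.card V with hm
  have hNnm : N = n + m := by simp [hN, hm]
  set s := S.ncard with hs
  have hs1 : 1 ≤ s := (Set.ncard_pos S.toFinite).mpr hS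
  have hsn : s ≤ n := by
    have := Set.ncard_le_ncard (Set.subset_univ S) Set.finite_univ
    simpa [Set.ncard_univ] using this
  have hm2 : 2 ≤ m := hV
  set S' : Set (Fin n ⊕ V) := Sum.inl '' S with hS'
  have hks : N - s - 1 < N := by omega
  set k : Fin N := ⟨N - s - 1, hks⟩ with hk
  set T : Set (Fin N) := {x | N - s ≤ (x : ℕ)} with hT
  have hS'card : S'.ncard = s := Set.ncard_image_of_injective S Sum.inl_injective
  have hnbr : ∀ a : Fin n, G'.neighborSet (Sum.inl a) = Set.range Sum.inr := gj_nbr_inl G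
  have hdeg : ∀ a : Fin n, 2 ≤ (G'.neighborSet (Sum.inl a)).ncard := by
    intro a
    rw [hnbr a]
    have h1 : (Set.range (Sum.inr : V → Fin n ⊕ V)).ncard = m := by
      rw [← Nat.card_coe_set_eq, Nat.card_range_of_injective Sum.inr_injective,
        Nat.card_eq_fintype_card]
    rw [h1]
    exact hm2
  have hpeak_inl : ∀ (ℓ : (Fin n ⊕ V) ≃ Fin N) (a : Fin n),
      IsPeak G' ℓ (Sum.inl a) ↔ ∀ u : V, ℓ (Sum.inr u) < ℓ (Sum.inl a) := by
    intro ℓ a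
    constructor
    · intro h u
      exact h.2 (Sum.inr u) (gj_adj_inl_inr _ _ _ _)
    · intro h
      refine ⟨hdeg a, ?_⟩
      rintro (b | b) hadj
      · exact absurd ((gj_adj_inl_inl _ _ _ _).1 hadj) (by simp)
      · exact h b
  have hchar : peakLabelings G' S' =
      {ℓ : (Fin n ⊕ V) ≃ Fin N | (∀ a, a ∈ S' ↔ ℓ a ∈ T) ∧ ℓ.symm k ∈ Set.range Sum.inr} := by
    ext ℓ
    simp only [peakLabelings, Set.mem_setOf_eq]
    constructor
    · intro hmem
      have hpk : ∀ v ∈ S, ∀ u : V, ℓ (Sum.inr u) < ℓ (Sum.inl v) := by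
        intro v hv u
        have h1 : Sum.inl v ∈ peakSet G' ℓ := by rw [hmem]; exact ⟨v, hv, rfl⟩
        exact ((hpeak_inl ℓ v).1 h1) u
      have hnp : ∀ w : Fin n, w ∉ S → ∃ u : V, ℓ (Sum.inl w) < ℓ (Sum.inr u) := by
        intro w hw
        have h1 : Sum.inl w ∉ peakSet G' ℓ := by
          rw [hmem]
          simp [hS', hw]
        rw [show (Sum.inl w ∈ peakSet G' ℓ) = IsPeak G' ℓ (Sum.inl w) from rfl,
          hpeak_inl ℓ w] at h1
        push_neg at h1
        obtain ⟨u, hu⟩ := h1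
        refine ⟨u, lt_of_le_of_ne hu ?_⟩
        intro hEq
        exact absurd (ℓ.injective hEq) (by simp)
      set F : Finset (Fin N) := Finset.univ.filter (fun x => ℓ.symm x ∈ S') with hF
      have hmemF : ∀ x, x ∈ F ↔ ℓ.symm x ∈ S' := by
        intro x
        simp [hF]
      have hFcard : F.card = s := by
        have himg : F = S'.toFinset.image ℓ := by
          ext x
          rw [hmemF]
          simp only [Finset.mem_image, Set.mem_toFinset]
          constructor
          · intro hx
            exact ⟨ℓ.symm x, hx, by simp⟩
          · rintro ⟨a, ha, rfl⟩
            simpa using ha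
        rw [himg, Finset.card_image_of_injective _ ℓ.injective,
          ← Set.ncard_eq_toFinset_card', hS'card]
      have hsep : ∀ x ∈ F, ∀ y, y ∉ F → y < x := by
        intro x hx y hy
        have hxS : ℓ.symm x ∈ S' := (hmemF x).1 hx
        have hyS : ℓ.symm y ∉ S' := fun h => hy ((hmemF y).2 h)
        obtain ⟨v, hv, hveq⟩ := hxS
        have hgoal : ℓ (ℓ.symm y) < ℓ (Sum.inl v) := by
          cases hyc : ℓ.symm y with
          | inl w =>
            have hwS : w ∉ S := fun hw => hyS (by rw [hyc]; exact ⟨w, hw, rfl⟩)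
            obtain ⟨u, hu⟩ := hnp w hwS
            exact lt_trans hu (hpk v hv u)
          | inr u =>
            exact hpk v hv u
        rw [Equiv.apply_symm_apply] at hgoal
        rw [hveq, Equiv.apply_symm_apply] at hgoal
        exact hgoal
      have hFtop : ∀ x : Fin N, x ∈ F ↔ N - s ≤ (x : ℕ) := by
        intro x
        constructor
        · intro hx
          by_contra hlt
          push_neg at hlt
          have hsub : Fᶜ ⊆ Finset.Iio x := by
            intro y hy
            rw [Finset.mem_compl] at hy
            exact Finset.mem_Iio.2 (hsep x hx y hy)
          have hc1 := Finset.card_le_card hsub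
          rw [Finset.card_compl, hFcard, Fin.card_Iio, Fintype.card_fin] at hc1
          omega
        · intro hge
          by_contra hx
          have hsub : Finset.Iic x ⊆ Fᶜ := by
            intro y hy
            rw [Finset.mem_compl]
            intro hyF
            have h2 := hsep y hyF x hx
            rw [Finset.mem_Iic] at hy
            exact absurd h2 (not_lt.2 hy)
          have hc1 := Finset.card_le_card hsub
          rw [Fin.card_Iic, Finset.card_compl, hFcard, Fintype.card_fin] at hc1
          omega
      constructor
      · intro a
        constructor
        · intro haS
          have h1 : ℓ.symm (ℓ a) ∈ S' := by simpa using haS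
          exact (hFtop (ℓ a)).1 ((hmemF (ℓ a)).2 h1)
        · intro haT
          have h1 := (hmemF (ℓ a)).1 ((hFtop (ℓ a)).2 haT)
          simpa using h1
      · cases hks' : ℓ.symm k with
        | inl w =>
          exfalso
          by_cases hw : w ∈ S
          · have h1 : k ∈ F := (hmemF k).2 (by rw [hks']; exact ⟨w, hw, rfl⟩)
            have h2 := (hFtop k).1 h1
            have h3 : (k : ℕ) = N - s - 1 := rfl
            omega
          · obtain ⟨u, hu⟩ := hnp w hw
            rw [← hks', Equiv.apply_symm_apply] at hu
            have h2 : ℓ (Sum.inr u) ∉ F := by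
              intro hmem2
              have h3 := (hmemF _).1 hmem2
              rw [Equiv.symm_apply_apply] at h3
              exact absurd h3 (by simp [hS'])
            have h3 : ¬ (N - s ≤ (ℓ (Sum.inr u) : ℕ)) := fun hh => h2 ((hFtop _).2 hh)
            have h4 : (k : ℕ) < (ℓ (Sum.inr u) : ℕ) := hu
            have h5 : (k : ℕ) = N - s - 1 := rfl
            omega
        | inr u =>
          exact ⟨u, rfl⟩
    · rintro ⟨hiff, hrange⟩
      obtain ⟨u₀, hu₀⟩ := hrange
      have hu₀' : ℓ (Sum.inr u₀) = k := by rw [hu₀, Equiv.apply_symm_apply]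
      have hvT : ∀ a, a ∈ S' → N - s ≤ (ℓ a : ℕ) := fun a ha => (hiff a).1 ha
      have hnT : ∀ a, a ∉ S' → (ℓ a : ℕ) < N - s := by
        intro a ha
        exact not_le.1 (fun h => ha ((hiff a).2 h))
      ext a
      cases a with
      | inl v =>
        have hmemS' : Sum.inl v ∈ S' ↔ v ∈ S := by simp [hS']
        rw [hmemS']
        have hpeq : Sum.inl v ∈ peakSet G' ℓ ↔ ∀ u : V, ℓ (Sum.inr u) < ℓ (Sum.inl v) :=
          hpeak_inl ℓ v
        rw [hpeq]
        constructor
        · intro hall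
          by_contra hv
          have hvS' : Sum.inl v ∉ S' := by simpa [hS'] using hv
          have h1 := hnT _ hvS'
          have h3 := hall u₀
          rw [hu₀'] at h3
          have h4 : (k : ℕ) < (ℓ (Sum.inl v) : ℕ) := h3
          have h5 : (k : ℕ) = N - s - 1 := rfl
          omega
        · intro hvS u
          have h1 := hvT _ (⟨v, hvS, rfl⟩ : Sum.inl v ∈ S')
          have h2 : Sum.inr u ∉ S' := by simp [hS']
          have h3 := hnT _ h2
          exact Fin.lt_def.2 (by omega)
      | inr u =>
        have h2 : Sum.inr u ∉ S' := by simp [hS']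
        simp only [h2, iff_false]
        intro hpk2
        obtain ⟨v, hv⟩ := hS
        have h1 := hpk2.2 (Sum.inl v) (gj_adj_inr_inl _ _ _ _)
        have h4 := hvT _ (⟨v, hv, rfl⟩ : Sum.inl v ∈ S')
        have h3 := hnT _ h2
        have h5 : (ℓ (Sum.inl v) : ℕ) < (ℓ (Sum.inr u) : ℕ) := h1
        omega
  -- counting
  have hscoe : Nat.card S' = s := by rw [Nat.card_coe_set_eq, hS'card]
  have hTcard : Nat.card T = s := by
    have eT : T ≃ Fin s :=
      { toFun := fun x => ⟨(x.1 : ℕ) - (N - s), by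
          have h1 : N - s ≤ (x.1 : ℕ) := x.2
          have h2 := x.1.isLt
          omega⟩
        invFun := fun j => ⟨⟨N - s + (j : ℕ), by omega⟩, by
          show N - s ≤ N - s + (j : ℕ)
          omega⟩
        left_inv := fun x => by
          have h1 : N - s ≤ (x.1 : ℕ) := x.2
          exact Subtype.ext (Fin.ext (by simp; omega))
        right_inv := fun j => Fin.ext (by simp) }
    rw [Nat.card_congr eT, Nat.card_eq_fintype_card, Fintype.card_fin]
  have hkT : k ∉ T := by
    intro hkk
    have h1 : N - s ≤ (k : ℕ) := hkk
    have h2 : (k : ℕ) = N - s - 1 := rfl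
    omega
  have hRS : ∀ a ∈ Set.range (Sum.inr : V → Fin n ⊕ V), a ∉ S' := by
    rintro a ⟨u, rfl⟩
    simp [hS']
  have hab : Fintype.card (Fin n ⊕ V) = Fintype.card (Fin N) := by
    rw [Fintype.card_fin]
  have hcount : (peakLabelings G' S').ncard =
      s.factorial * (m * (N - s - 1).factorial) := by
    rw [← Nat.card_coe_set_eq, hchar]
    have main := myCardTwo S' T k (Set.range (Sum.inr : V → Fin n ⊕ V)) hkT hRS hab
      (by rw [hscoe, hTcard])
    rw [hscoe, Nat.card_range_of_injective Sum.inr_injective,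
      Nat.card_eq_fintype_card (α := V)] at main
    exact main
  refine ⟨?_, ?_⟩
  · apply Set.nonempty_of_ncard_ne_zero
    rw [hcount]
    have := Nat.factorial_pos s
    have := Nat.factorial_pos (N - s - 1)
    positivity
  · rw [hcount, hNnm]
    ring
end

section
/- Let G be a finite simple graph with |V(G)| > 1, let n ≥ 1, let G' = K̄_n ∨ G with m = n + |V(G)| vertices, let S ⊆ V(K̄_n) be nonempty with |S| < n, and let ℓ be a labeling of G' with peak set exactly S. Then the vertex receiving the label m − |S| belongs to V(G). -/
open SimpleGraph

/-- for `|V(G)| > 1`, `n ≥ 1`, `G' = K̄_n ∨ G` with `m = n + |V(G)|` vertices,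
nonempty `S ⊆ V(K̄_n)` with `|S| < n`, and a labeling `ℓ` of `G'` with peak set exactly `S`,
the vertex receiving the label `m − |S|` belongs to `V(G)`. -/
theorem null_join_next_label_in_G {V : Type*} [Fintype V] (G : SimpleGraph V)
    (hV : 1 < Fintype.card V) (n : ℕ) (hn : 1 ≤ n)
    (S : Set (Fin n)) (hS : S.Nonempty) (hSn : S.ncard < n)
    (ℓ : (Fin n ⊕ V) ≃ Fin (Fintype.card (Fin n ⊕ V)))
    (hℓ : peakSet (graphJoin (⊥ : SimpleGraph (Fin n)) G) ℓ = Sum.inl '' S) :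
    ∀ x : Fin n ⊕ V, (ℓ x : ℕ) + 1 = n + Fintype.card V - S.ncard →
      x ∈ Set.range Sum.inr := by
  intro x hx
  classical
  have hm : Fintype.card (Fin n ⊕ V) = n + Fintype.card V := by simp
  have hVne : Nonempty V := Fintype.card_pos_iff.mp (by omega)
  obtain ⟨v₀, -, hv₀⟩ := Finset.exists_max_image Finset.univ (fun v => ℓ (Sum.inr v))
    ⟨Classical.arbitrary V, Finset.mem_univ _⟩
  set M := ℓ (Sum.inr v₀) with hM
  have hadj : ∀ (a : Fin n) (w), (graphJoin (⊥ : SimpleGraph (Fin n)) G).Adj (Sum.inl a) w ↔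
      w ∈ Set.range (Sum.inr : V → Fin n ⊕ V) := by
    intro a w
    cases w with
    | inl b =>
      constructor
      · intro h; exact absurd h (by simp [graphJoin])
      · rintro ⟨v, h⟩; simp at h
    | inr v =>
      constructor
      · intro _; exact ⟨v, rfl⟩
      · intro _; trivial
  have hnb : ∀ a : Fin n, (graphJoin (⊥ : SimpleGraph (Fin n)) G).neighborSet (Sum.inl a)
      = Set.range (Sum.inr : V → Fin n ⊕ V) := by
    intro a; ext w; exact hadj a w
  have hcardrange : (Set.range (Sum.inr : V → Fin n ⊕ V)).ncard = Fintype.card V := by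
    rw [Set.ncard_eq_toFinset_card']
    simp [Set.toFinset_range, Finset.card_image_of_injective _ Sum.inr_injective]
  have hA : ∀ a : Fin n, (Sum.inl a ∈ (Sum.inl '' S : Set (Fin n ⊕ V))) ↔ M < ℓ (Sum.inl a) := by
    intro a
    rw [← hℓ]
    constructor
    · intro h
      exact h.2 _ ((hadj a _).2 ⟨v₀, rfl⟩)
    · intro h
      refine ⟨?_, ?_⟩
      · rw [hnb, hcardrange]; omega
      · intro w hw
        obtain ⟨v, rfl⟩ := (hadj a w).1 hw
        exact lt_of_le_of_lt (hv₀ v (Finset.mem_univ v)) h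
  have hF : (Finset.univ.filter (fun x : Fin n ⊕ V => M < ℓ x))
      = S.toFinset.image Sum.inl := by
    ext w
    cases w with
    | inl a =>
      simp only [Finset.mem_filter, Finset.mem_univ, true_and, Finset.mem_image,
        Set.mem_toFinset]
      rw [← hA a]
      simp [Sum.inl_injective.eq_iff]
    | inr v =>
      simp only [Finset.mem_filter, Finset.mem_univ, true_and, Finset.mem_image,
        Set.mem_toFinset]
      constructor
      · intro h; exact absurd h (not_lt.mpr (hv₀ v (Finset.mem_univ v)))
      · rintro ⟨a, -, h⟩; exact absurd h (by simp)
  have hcardF : (Finset.univ.filter (fun x : Fin n ⊕ V => M < ℓ x)).card = S.ncard := by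
    rw [hF, Finset.card_image_of_injective _ Sum.inl_injective, Set.ncard_eq_toFinset_card']
  have hcardF' : (Finset.univ.filter (fun x : Fin n ⊕ V => M < ℓ x)).card
      = (Finset.Ioi M).card := by
    refine Finset.card_bij' (fun x _ => ℓ x) (fun k _ => ℓ.symm k) ?_ ?_ ?_ ?_
    · intro x hx'; simp only [Finset.mem_filter] at hx'; simpa using hx'.2
    · intro k hk; simp only [Finset.mem_Ioi] at hk; simp [hk]
    · intro x _; simp
    · intro k _; simp
  have hIoi : (Finset.Ioi M).card = Fintype.card (Fin n ⊕ V) - 1 - (M : ℕ) := Fin.card_Ioi M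
  have hMlt : (M : ℕ) < Fintype.card (Fin n ⊕ V) := M.isLt
  have hxlt : (ℓ x : ℕ) < Fintype.card (Fin n ⊕ V) := (ℓ x).isLt
  have hSM : S.ncard = Fintype.card (Fin n ⊕ V) - 1 - (M : ℕ) := by
    rw [← hcardF, hcardF', hIoi]
  have hxM : (ℓ x : ℕ) = (M : ℕ) := by omega
  have : x = Sum.inr v₀ := ℓ.injective (Fin.ext hxM)
  exact ⟨v₀, this.symm⟩
end

section
/- Let G be a finite simple graph, let n ≥ 1 with n + |V(G)| ≥ 3, let G' = K_n ∨ G, and let S = {v} with v ∈ V(K_n). Then |P(S;G')| = (|V(G')| − 1)!, where |V(G')| = n + |V(G)|. -/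
open SimpleGraph

lemma count_fix {α : Type*} [Fintype α] [DecidableEq α] (a : α) (k : Fin (Fintype.card α)) :
    {ℓ : α ≃ Fin (Fintype.card α) | ℓ a = k}.ncard =
      Nat.factorial (Fintype.card α - 1) := by
  classical
  let N := Fintype.card α
  have e : α ≃ Fin N := Fintype.equivFin α
  set e₀ : α ≃ Fin N := e.trans (Equiv.swap (e a) k) with he₀
  have he₀a : e₀ a = k := by simp [he₀]
  have E1 : {ℓ : α ≃ Fin N // ℓ a = k} ≃ {π : Equiv.Perm (Fin N) // π k = k} := by
    refine Equiv.subtypeEquiv (Equiv.equivCongr e₀ (Equiv.refl (Fin N))) ?_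
    intro ℓ
    have h : e₀.symm k = a := by rw [← he₀a, Equiv.symm_apply_apply]
    simp [Equiv.equivCongr, h]
  have E2 : {π : Equiv.Perm (Fin N) // π k = k} ≃ Equiv.Perm {x : Fin N // x ≠ k} := by
    refine (Equiv.subtypeEquivRight ?_).trans
      (Equiv.Perm.subtypeEquivSubtypePerm (· ≠ k)).symm
    intro π
    constructor
    · intro h x hx
      rw [not_not] at hx; subst hx; exact h
    · intro h; exact h k (by simp)
  rw [← Nat.card_coe_set_eq]
  have : Nat.card {ℓ : α ≃ Fin N | ℓ a = k} = Nat.card (Equiv.Perm {x : Fin N // x ≠ k}) :=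
    Nat.card_congr (E1.trans E2)
  rw [this, Nat.card_eq_fintype_card, Fintype.card_perm]
  congr 1
  have : Fintype.card {x : Fin N // ¬ (x = k)} = Fintype.card α - 1 := by
    rw [Fintype.card_subtype_compl, Fintype.card_subtype_eq, Fintype.card_fin]
  exact this


/-- for `G' = K_n ∨ G` with `n ≥ 1` and `n + |V(G)| ≥ 3`, and `S = {v}` with
`v ∈ V(K_n)`, we have `|P(S;G')| = (|V(G')| − 1)!`. -/
theorem complete_join_singleton_peak_count {V : Type*} [Fintype V] (G : SimpleGraph V)
    (n : ℕ) (hn : 1 ≤ n) (hcard : 3 ≤ n + Fintype.card V) (v : Fin n) :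
    (peakLabelings (graphJoin (⊤ : SimpleGraph (Fin n)) G) {Sum.inl v}).ncard =
      Nat.factorial (n + Fintype.card V - 1) := by
  classical
  set J := graphJoin (⊤ : SimpleGraph (Fin n)) G with hJ
  have hcardV' : Fintype.card (Fin n ⊕ V) = n + Fintype.card V := by simp
  have hN3 : 3 ≤ Fintype.card (Fin n ⊕ V) := by rw [hcardV']; exact hcard
  set kmax : Fin (Fintype.card (Fin n ⊕ V)) :=
    ⟨Fintype.card (Fin n ⊕ V) - 1, by omega⟩ with hkmax
  have hadj : ∀ w, w ≠ Sum.inl v → J.Adj (Sum.inl v) w := by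
    rintro (u | u) hw
    · show (⊤ : SimpleGraph (Fin n)).Adj v u
      simp only [top_adj]
      exact fun h => hw (congrArg Sum.inl h.symm)
    · trivial
  have hnbr : J.neighborSet (Sum.inl v) = {Sum.inl v}ᶜ := by
    ext w
    simp only [mem_neighborSet, Set.mem_compl_iff, Set.mem_singleton_iff]
    exact ⟨fun h => h.ne', fun h => hadj w h⟩
  have hdeg : 2 ≤ (J.neighborSet (Sum.inl v)).ncard := by
    rw [hnbr]
    have h1 := Set.ncard_add_ncard_compl ({Sum.inl v} : Set (Fin n ⊕ V))
    rw [Set.ncard_singleton, Nat.card_eq_fintype_card] at h1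
    omega
  have hchar : peakLabelings J {Sum.inl v} = {ℓ | ℓ (Sum.inl v) = kmax} := by
    ext ℓ
    simp only [peakLabelings, Set.mem_setOf_eq]
    constructor
    · intro hps
      have hmem : Sum.inl v ∈ peakSet J ℓ := hps ▸ Set.mem_singleton _
      obtain ⟨-, hlt⟩ := hmem
      by_contra hne
      set x := ℓ.symm kmax with hx
      have hxv : x ≠ Sum.inl v := by
        intro h
        exact hne (by rw [← h, hx, Equiv.apply_symm_apply])
      have h1 := hlt x (hadj x hxv)
      have h2 : ℓ x = kmax := by rw [hx, Equiv.apply_symm_apply]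
      rw [h2] at h1
      have h3 := (ℓ (Sum.inl v)).isLt
      rw [Fin.lt_def] at h1
      simp only [hkmax] at h1
      omega
    · intro hk
      ext x
      simp only [peakSet, Set.mem_setOf_eq, Set.mem_singleton_iff]
      constructor
      · intro hx
        by_contra hxv
        have h1 := hx.2 (Sum.inl v) ((hadj x hxv).symm)
        rw [hk, Fin.lt_def] at h1
        have h3 := (ℓ x).isLt
        simp only [hkmax] at h1
        omega
      · rintro rfl
        refine ⟨hdeg, fun w hw => ?_⟩
        have hwne : ℓ w ≠ ℓ (Sum.inl v) := fun h => hw.ne' (ℓ.injective h)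
        rw [hk] at hwne ⊢
        have h3 := (ℓ w).isLt
        rw [Fin.lt_def]
        simp only [hkmax]
        have : (ℓ w).val ≠ Fintype.card (Fin n ⊕ V) - 1 := by
          intro h
          exact hwne (Fin.ext (by simp [hkmax, h]))
        omega
  rw [hchar]
  have := count_fix (Sum.inl v) kmax
  rw [this, hcardV']
end

section
/- Let n ≥ 3 and let 𝒮_n = K_1 ∨ K̄_{n−1} be the star graph on n vertices with center c (the K_1 vertex). Then |P(∅; 𝒮_n)| = (n−1)! · (n−1), i.e., the number of labelings of the star with no peaks is (n−1)!(n−1). -/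
open SimpleGraph

/-- for the star graph `𝒮_n = K_1 ∨ K̄_{n−1}` on `n ≥ 3` vertices,
`|P(∅; 𝒮_n)| = (n−1)! ⬝ (n−1)`. -/
theorem star_empty_peak_count (n : ℕ) (hn : 3 ≤ n) :
    (peakLabelings
        (graphJoin (⊤ : SimpleGraph (Fin 1)) (⊥ : SimpleGraph (Fin (n - 1))))
        (∅ : Set (Fin 1 ⊕ Fin (n - 1)))).ncard =
      Nat.factorial (n - 1) * (n - 1) := by
  classical
  set G := graphJoin (⊤ : SimpleGraph (Fin 1)) (⊥ : SimpleGraph (Fin (n - 1))) with hG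
  have hN : Fintype.card (Fin 1 ⊕ Fin (n - 1)) = n := by
    simp only [Fintype.card_sum, Fintype.card_fin]; omega
  set N := Fintype.card (Fin 1 ⊕ Fin (n - 1)) with hNdef
  set c : Fin 1 ⊕ Fin (n - 1) := Sum.inl 0 with hc
  have hNpos : 0 < N := by omega
  set top : Fin N := ⟨n - 1, by omega⟩ with htop
  have htopmax : ∀ x : Fin N, x ≤ top := by
    intro x
    have := x.isLt
    simp only [Fin.le_def, htop]
    omega
  -- neighbor set of the center
  have hnc : G.neighborSet c = Set.range Sum.inr := by
    ext v
    cases v with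
    | inl u =>
      have hu : u = 0 := Subsingleton.elim _ _
      subst hu
      simp [SimpleGraph.neighborSet, hG, graphJoin, hc]
    | inr i =>
      simp [SimpleGraph.neighborSet, hG, graphJoin, hc]
  have hcard_c : (G.neighborSet c).ncard = n - 1 := by
    rw [hnc, ← Nat.card_coe_set_eq, Nat.card_range_of_injective Sum.inr_injective,
      Nat.card_eq_fintype_card, Fintype.card_fin]
  -- neighbor set of a leaf
  have hleaf : ∀ i : Fin (n - 1), G.neighborSet (Sum.inr i) = {c} := by
    intro i
    ext v
    cases v with
    | inl u =>
      have hu : u = 0 := Subsingleton.elim _ _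
      subst hu
      simp [SimpleGraph.neighborSet, hG, graphJoin, hc]
    | inr j =>
      simp [SimpleGraph.neighborSet, hG, graphJoin, hc]
  -- the key set equality
  have hkey : peakLabelings G (∅ : Set (Fin 1 ⊕ Fin (n - 1)))
      = {ℓ : (Fin 1 ⊕ Fin (n - 1)) ≃ Fin N | ℓ c = top}ᶜ := by
    ext ℓ
    simp only [peakLabelings, Set.mem_setOf_eq, Set.mem_compl_iff]
    constructor
    · intro h hctop
      have hpk : c ∈ peakSet G ℓ := by
        refine ⟨by rw [hcard_c]; omega, ?_⟩
        intro w hw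
        have hwc : w ≠ c := by
          intro h'
          subst h'
          exact G.loopless.irrefl _ hw
        have hne : ℓ w ≠ top := by
          intro h'
          exact hwc (ℓ.injective (h'.trans hctop.symm))
        rw [hctop]
        exact lt_of_le_of_ne (htopmax _) hne
      rw [h] at hpk
      exact hpk
    · intro h
      ext v
      simp only [peakSet, Set.mem_setOf_eq, Set.mem_empty_iff_false, iff_false]
      cases v with
      | inl u =>
        have hu : u = 0 := Subsingleton.elim _ _
        subst hu
        rintro ⟨-, hpk⟩
        have h1 : ℓ (ℓ.symm top) = top := ℓ.apply_symm_apply top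
        cases hv : ℓ.symm top with
        | inl u' =>
          have hu' : u' = 0 := Subsingleton.elim _ _
          subst hu'
          rw [hv] at h1
          exact h h1
        | inr i =>
          rw [hv] at h1
          have hadj : G.Adj c (Sum.inr i) := by
            simp [hG, graphJoin, hc]
          have hlt := hpk (Sum.inr i) hadj
          rw [h1] at hlt
          exact absurd (htopmax (ℓ c)) (not_le.mpr hlt)
      | inr i =>
        rintro ⟨hdeg, -⟩
        rw [hleaf i, Set.ncard_singleton] at hdeg
        omega
  -- counting the complement set {ℓ | ℓ c = top}
  have e₀ : ({c} : Set (Fin 1 ⊕ Fin (n - 1))) ≃ ({top} : Set (Fin N)) :=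
    Equiv.ofUnique _ _
  have he₀ : ∀ x : ({c} : Set (Fin 1 ⊕ Fin (n - 1))), (e₀ x : Fin N) = top := by
    intro x
    exact (e₀ x).2
  have hsub : {ℓ : (Fin 1 ⊕ Fin (n - 1)) ≃ Fin N // ℓ c = top}
      ≃ {ℓ : (Fin 1 ⊕ Fin (n - 1)) ≃ Fin N //
          ∀ x : ({c} : Set (Fin 1 ⊕ Fin (n - 1))), ℓ x = e₀ x} := by
    refine Equiv.subtypeEquivRight fun ℓ => ⟨fun hl x => ?_, fun hl => ?_⟩
    · rcases x with ⟨x, hx⟩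
      rcases hx with rfl
      rw [he₀]
      exact hl
    · have := hl ⟨c, rfl⟩
      rwa [he₀] at this
  have hcmpl : Fintype.card (↥(({c} : Set (Fin 1 ⊕ Fin (n - 1)))ᶜ)) = n - 1 := by
    rw [Fintype.card_compl_set]
    simp [hN]
  have hcmpl' : Fintype.card (↥(({top} : Set (Fin N))ᶜ)) = n - 1 := by
    rw [Fintype.card_compl_set]
    simp [hNdef, hN]
  have hcardfix : Nat.card {ℓ : (Fin 1 ⊕ Fin (n - 1)) ≃ Fin N // ℓ c = top}
      = Nat.factorial (n - 1) := by
    rw [Nat.card_congr (hsub.trans (Equiv.Set.compl e₀)), Nat.card_eq_fintype_card,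
      Fintype.card_equiv (Fintype.equivOfCardEq (hcmpl.trans hcmpl'.symm)), hcmpl]
  have htot : Nat.card ((Fin 1 ⊕ Fin (n - 1)) ≃ Fin N) = Nat.factorial n := by
    rw [Nat.card_eq_fintype_card, Fintype.card_equiv (Fintype.equivFin _), ← hNdef, hN]
  have h2 := Set.ncard_add_ncard_compl
    {ℓ : (Fin 1 ⊕ Fin (n - 1)) ≃ Fin N | ℓ c = top}
  have h3 : ({ℓ : (Fin 1 ⊕ Fin (n - 1)) ≃ Fin N | ℓ c = top}).ncard = Nat.factorial (n - 1) := by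
    rw [← Nat.card_coe_set_eq]
    exact hcardfix
  have h5 : Nat.factorial (n - 1) * (n - 1) + Nat.factorial (n - 1) = Nat.factorial n := by
    obtain ⟨m, rfl⟩ : ∃ m, n = m + 1 := ⟨n - 1, by omega⟩
    simp only [Nat.add_sub_cancel, Nat.factorial_succ]
    ring
  rw [hkey]
  omega
end

section
/- Let 2 ≤ k < n, and let k𝒮_n = K_k ∨ K̄_{n−k} be the ternary star graph on n vertices. For any nonempty S ⊆ V(K̄_{n−k}), |P(S; k𝒮_n)| = |S|! · k · (n − |S| − 1)!. -/
open SimpleGraph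

lemma card_equiv_fix {α β : Type*} [Fintype α] [DecidableEq α] [Fintype β] [DecidableEq β]
    (h : Fintype.card α = Fintype.card β) (a : α) (b : β) :
    Nat.card {e : α ≃ β // e a = b} = Nat.factorial (Fintype.card α - 1) := by
  classical
  let e₀ : ({a} : Set α) ≃ ({b} : Set β) := Equiv.ofUnique _ _
  have h1 : {e : α ≃ β // e a = b} ≃ {e : α ≃ β // ∀ x : ({a} : Set α), e x = e₀ x} := by
    refine Equiv.subtypeEquivRight fun e => ?_
    constructor
    · rintro he ⟨x, hx⟩
      rcases hx with rfl
      rw [Set.mem_singleton_iff.1 (e₀ _).2]; exact he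
    · intro he
      have h' := he ⟨a, rfl⟩; rwa [Set.mem_singleton_iff.1 (e₀ _).2] at h'
  have h2 := (Equiv.Set.compl e₀)
  have hcompl : Fintype.card (↥({a} : Set α)ᶜ) = Fintype.card α - 1 := by
    rw [Fintype.card_compl_set]; simp
  have hcompl' : Fintype.card (↥({b} : Set β)ᶜ) = Fintype.card α - 1 := by
    rw [Fintype.card_compl_set]; simp [h]
  have e2 : (↥({a} : Set α)ᶜ) ≃ (↥({b} : Set β)ᶜ) :=
    (Fintype.equivFinOfCardEq hcompl).trans (Fintype.equivFinOfCardEq hcompl').symm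
  rw [Nat.card_congr (h1.trans h2)]
  rw [Nat.card_eq_fintype_card, Fintype.card_equiv e2, hcompl]

lemma card_symm_last_mem {W : Type*} [Fintype W] [DecidableEq W] {c : ℕ}
    (hW : Fintype.card W = c + 1) (A : Set W) :
    Nat.card {g : W ≃ Fin (c + 1) // g.symm (Fin.last c) ∈ A} = A.ncard * Nat.factorial c := by
  classical
  have e : {g : W ≃ Fin (c + 1) // g.symm (Fin.last c) ∈ A} ≃
      Σ a : A, {g : W ≃ Fin (c + 1) // g.symm (Fin.last c) = a} :=
    (Equiv.sigmaSubtypeFiberEquivSubtype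
      (fun g : W ≃ Fin (c + 1) => g.symm (Fin.last c)) (fun _ => Iff.rfl)).symm
  rw [Nat.card_congr e, Nat.card_eq_fintype_card, Fintype.card_sigma]
  have hfib : ∀ a : A, Fintype.card {g : W ≃ Fin (c + 1) // g.symm (Fin.last c) = a}
      = Nat.factorial c := by
    intro a
    have e2 : {g : W ≃ Fin (c + 1) // g.symm (Fin.last c) = a} ≃
        {g : W ≃ Fin (c + 1) // g (a : W) = Fin.last c} :=
      Equiv.subtypeEquivRight fun g => by
        rw [Equiv.symm_apply_eq, eq_comm]
    have := card_equiv_fix (α := W) (β := Fin (c + 1)) (by simp [hW]) (a : W) (Fin.last c)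
    rw [← Nat.card_eq_fintype_card, Nat.card_congr e2, this, hW]
    simp
  simp only [hfib]
  rw [Finset.sum_const, Finset.card_univ, smul_eq_mul, ← Nat.card_coe_set_eq,
    Nat.card_eq_fintype_card]

/-- for the ternary star graph `k𝒮_n = K_k ∨ K̄_{n−k}` with `2 ≤ k < n`
and nonempty `S ⊆ V(K̄_{n−k})`, `|P(S; k𝒮_n)| = |S|! ⬝ k ⬝ (n − |S| − 1)!`. -/
theorem ternary_star_null_side_count (n k : ℕ) (hk : 2 ≤ k) (hkn : k < n)
    (S : Set (Fin (n - k))) (hS : S.Nonempty) :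
    (peakLabelings
        (graphJoin (⊤ : SimpleGraph (Fin k)) (⊥ : SimpleGraph (Fin (n - k))))
        (Sum.inr '' S)).ncard =
      Nat.factorial S.ncard * k * Nat.factorial (n - S.ncard - 1) := by
  classical
  set G := graphJoin (⊤ : SimpleGraph (Fin k)) (⊥ : SimpleGraph (Fin (n - k))) with hG
  set S' : Set (Fin k ⊕ Fin (n - k)) := Sum.inr '' S with hS'def
  set m := S.ncard with hm
  have hNn : Fintype.card (Fin k ⊕ Fin (n - k)) = n := by
    simp only [Fintype.card_sum, Fintype.card_fin]; omega
  have hmle : m ≤ n - k := by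
    have h1 : S.ncard ≤ (Set.univ : Set (Fin (n - k))).ncard :=
      Set.ncard_le_ncard (Set.subset_univ S) (Set.toFinite _)
    rwa [Set.ncard_univ, Nat.card_eq_fintype_card, Fintype.card_fin] at h1
  have hm1 : 1 ≤ m := (Set.ncard_pos).2 hS
  set c := n - m - 1 with hcdef
  have hc : n - m = c + 1 := by omega
  have hcm : c + 1 + m = n := by omega
  have hS'm : S'.ncard = m := Set.ncard_image_of_injective S Sum.inr_injective
  have hinl_not : ∀ u : Fin k, Sum.inl u ∉ S' := by
    rintro u ⟨x, -, h⟩; exact absurd h (by simp)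
  have hinr_mem : ∀ x : Fin (n - k), Sum.inr x ∈ S' ↔ x ∈ S := fun x =>
    Sum.inr_injective.mem_set_image
  -- neighbor sets
  have hnbrR : ∀ x : Fin (n - k), G.neighborSet (Sum.inr x) = Set.range Sum.inl := by
    intro x
    ext w
    rcases w with u | y
    · simp only [mem_neighborSet, Set.mem_range]
      exact ⟨fun _ => ⟨u, rfl⟩, fun _ => trivial⟩
    · simp only [mem_neighborSet, Set.mem_range]
      constructor
      · intro h; exact absurd h (by simp [hG, graphJoin])
      · rintro ⟨u, h⟩; exact absurd h (by simp)
  have adjLL : ∀ u u' : Fin k, G.Adj (Sum.inl u) (Sum.inl u') ↔ u ≠ u' := by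
    intro u u'
    constructor
    · intro h he
      rw [he] at h
      exact G.loopless.irrefl _ h
    · intro h
      show (⊤ : SimpleGraph (Fin k)).Adj u u'
      simpa using h
  have hnbrL : ∀ u : Fin k, G.neighborSet (Sum.inl u) = {Sum.inl u}ᶜ := by
    intro u
    ext w
    rcases w with u' | y
    · simp only [mem_neighborSet, Set.mem_compl_iff, Set.mem_singleton_iff, adjLL,
        ne_eq, Sum.inl.injEq]
      exact ⟨fun h he => h he.symm, fun h he => h he.symm⟩
    · simp only [mem_neighborSet, Set.mem_compl_iff, Set.mem_singleton_iff]
      constructor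
      · intro _ h
        cases h
      · intro _
        trivial
  have hncR : ∀ x : Fin (n - k), (G.neighborSet (Sum.inr x)).ncard = k := by
    intro x
    rw [hnbrR, ← Nat.card_coe_set_eq]
    exact (Nat.card_range_of_injective Sum.inl_injective).trans
      (Nat.card_eq_fintype_card.trans (Fintype.card_fin k))
  have hncL : ∀ u : Fin k, (G.neighborSet (Sum.inl u)).ncard = n - 1 := by
    intro u
    rw [hnbrL, ← Nat.card_coe_set_eq, Nat.card_eq_fintype_card, Fintype.card_compl_set]
    simp [hNn]
  -- peak characterizations
  have peak_inr : ∀ (ℓ : (Fin k ⊕ Fin (n - k)) ≃ Fin (Fintype.card (Fin k ⊕ Fin (n - k))))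
      (x : Fin (n - k)),
      IsPeak G ℓ (Sum.inr x) ↔ ∀ u : Fin k, ℓ (Sum.inl u) < ℓ (Sum.inr x) := by
    intro ℓ x
    constructor
    · intro h u
      exact h.2 _ trivial
    · intro h
      refine ⟨by rw [hncR]; omega, ?_⟩
      intro w hw
      rcases w with u | y
      · exact h u
      · exact absurd hw (by simp [hG, graphJoin])
  have peak_inl : ∀ (ℓ : (Fin k ⊕ Fin (n - k)) ≃ Fin (Fintype.card (Fin k ⊕ Fin (n - k))))
      (u : Fin k),
      IsPeak G ℓ (Sum.inl u) ↔ ∀ w, w ≠ Sum.inl u → ℓ w < ℓ (Sum.inl u) := by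
    intro ℓ u
    constructor
    · intro h w hw
      refine h.2 _ ?_
      have : w ∈ G.neighborSet (Sum.inl u) := by rw [hnbrL]; simpa using hw
      exact this
    · intro h
      refine ⟨by rw [hncL]; omega, ?_⟩
      intro w hw
      refine h w ?_
      intro he
      rw [he] at hw
      exact G.loopless.irrefl _ hw
  have key : ∀ ℓ : (Fin k ⊕ Fin (n - k)) ≃ Fin (Fintype.card (Fin k ⊕ Fin (n - k))),
      peakSet G ℓ = S' ↔
      ((∀ v, v ∈ S' ↔ c + 1 ≤ (ℓ v : ℕ)) ∧ ∃ u : Fin k, (ℓ (Sum.inl u) : ℕ) = c) := by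
    intro ℓ
    constructor
    · intro hps
      have hpeak : ∀ v, IsPeak G ℓ v ↔ v ∈ S' := fun v => by
        rw [← hps]; rfl
      have ha : ∀ x ∈ S, ∀ u : Fin k, ℓ (Sum.inl u) < ℓ (Sum.inr x) := by
        intro x hx u
        exact (peak_inr ℓ x).1 ((hpeak _).2 ((hinr_mem x).2 hx)) u
      have hb : ∀ x ∉ S, ∃ u : Fin k, ℓ (Sum.inr x) ≤ ℓ (Sum.inl u) := by
        intro x hx
        have h1 : ¬ IsPeak G ℓ (Sum.inr x) := fun h => hx ((hinr_mem x).1 ((hpeak _).1 h))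
        rw [peak_inr] at h1
        push_neg at h1
        exact h1
      have hup : ∀ v ∈ S', ∀ w, w ∉ S' → ℓ w < ℓ v := by
        rintro v ⟨x, hx, rfl⟩ w hw
        rcases w with u | y
        · exact ha x hx u
        · have hy : y ∉ S := fun h => hw ((hinr_mem y).2 h)
          obtain ⟨u, hu⟩ := hb y hy
          exact lt_of_le_of_lt hu (ha x hx u)
      have himg : (ℓ '' S').ncard = m := by
        rw [Set.ncard_image_of_injective _ ℓ.injective, hS'm]
      have hmem : ∀ v, v ∈ S' ↔ c + 1 ≤ (ℓ v : ℕ) := by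
        intro v
        constructor
        · intro hv
          have hsub : Set.Ici (ℓ v) ⊆ ℓ '' S' := by
            intro j hj
            obtain ⟨w, rfl⟩ := ℓ.surjective j
            by_contra hw
            have hw' : w ∉ S' := fun h => hw (Set.mem_image_of_mem _ h)
            exact absurd (hup v hv w hw') (not_lt.2 hj)
          have hcard := Set.ncard_le_ncard hsub (Set.toFinite _)
          rw [himg, ← Nat.card_coe_set_eq, Nat.card_eq_fintype_card,
            Fintype.card_Ici, Fin.card_Ici] at hcard
          have hlt := (ℓ v).isLt
          omega
        · intro hge
          by_contra hv
          have hsub2 : ℓ '' S' ⊆ Set.Ioi (ℓ v) := by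
            rintro j ⟨w, hw, rfl⟩
            exact hup w hw v hv
          have hcard := Set.ncard_le_ncard hsub2 (Set.toFinite _)
          rw [himg, ← Nat.card_coe_set_eq, Nat.card_eq_fintype_card,
            Fintype.card_Ioi, Fin.card_Ioi] at hcard
          have hlt := (ℓ v).isLt
          omega
      refine ⟨hmem, ?_⟩
      have hcN : c < Fintype.card (Fin k ⊕ Fin (n - k)) := by omega
      set j : Fin (Fintype.card (Fin k ⊕ Fin (n - k))) := ⟨c, hcN⟩ with hj
      have hwval : (ℓ (ℓ.symm j) : ℕ) = c := by rw [Equiv.apply_symm_apply]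
      have hwS' : ℓ.symm j ∉ S' := by
        rw [hmem]
        omega
      rcases hweq : ℓ.symm j with u | x
      · exact ⟨u, by rw [← hweq]; exact hwval⟩
      · exfalso
        rw [hweq] at hwS' hwval
        have hx : x ∉ S := fun h => hwS' ((hinr_mem x).2 h)
        obtain ⟨u, hu⟩ := hb x hx
        have h1 : (ℓ (Sum.inr x) : ℕ) ≤ (ℓ (Sum.inl u) : ℕ) := hu
        have h2 : ¬ (c + 1 ≤ (ℓ (Sum.inl u) : ℕ)) := fun h => hinl_not u ((hmem _).2 h)
        have h3 : (ℓ (Sum.inl u) : ℕ) = c := by omega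
        have h4 : ℓ (Sum.inl u) = ℓ (Sum.inr x) := Fin.ext (by rw [h3, hwval])
        exact Sum.inl_ne_inr (ℓ.injective h4)
    · rintro ⟨hmem, u₀, hu₀⟩
      ext v
      show IsPeak G ℓ v ↔ v ∈ S'
      rcases v with u | x
      · refine iff_of_false ?_ (hinl_not u)
        intro hp
        obtain ⟨s, hs⟩ := hS
        have hlt : (ℓ (Sum.inr s) : ℕ) < (ℓ (Sum.inl u) : ℕ) :=
          (peak_inl ℓ u).1 hp (Sum.inr s) (by simp)
        have h1 : c + 1 ≤ (ℓ (Sum.inr s) : ℕ) := (hmem _).1 ((hinr_mem s).2 hs)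
        have h2 : ¬ (c + 1 ≤ (ℓ (Sum.inl u) : ℕ)) := fun h => hinl_not u ((hmem _).2 h)
        omega
      · rw [peak_inr, hinr_mem]
        constructor
        · intro hall
          by_contra hx
          have hxm : ¬ (c + 1 ≤ (ℓ (Sum.inr x) : ℕ)) :=
            fun h => hx ((hinr_mem x).1 ((hmem _).2 h))
          have hlt : (ℓ (Sum.inl u₀) : ℕ) < (ℓ (Sum.inr x) : ℕ) := hall u₀
          omega
        · intro hx u
          have h1 : c + 1 ≤ (ℓ (Sum.inr x) : ℕ) := (hmem _).1 ((hinr_mem x).2 hx)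
          have h2 : ¬ (c + 1 ≤ (ℓ (Sum.inl u) : ℕ)) := fun h => hinl_not u ((hmem _).2 h)
          exact Fin.lt_def.2 (by omega)
  have hfin : (c + 1) + m = Fintype.card (Fin k ⊕ Fin (n - k)) := by omega
  set A : Set ↥S'ᶜ := {w | ∃ u : Fin k, (w : Fin k ⊕ Fin (n - k)) = Sum.inl u} with hA
  let D := (↥S' ≃ Fin m) × {g : ↥S'ᶜ ≃ Fin (c + 1) // g.symm (Fin.last c) ∈ A}
  let Φ : D → ((Fin k ⊕ Fin (n - k)) ≃ Fin (Fintype.card (Fin k ⊕ Fin (n - k)))) := fun p =>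
    (Equiv.Set.sumCompl S').symm.trans ((p.1.sumCongr p.2.1).trans
      ((Equiv.sumComm (Fin m) (Fin (c + 1))).trans ((finSumFinEquiv).trans (finCongr hfin))))
  have hΦmem : ∀ (p : D) v (h : v ∈ S'), ((Φ p) v : ℕ) = (c + 1) + (p.1 ⟨v, h⟩ : ℕ) := by
    intro p v h
    simp [Φ, Equiv.Set.sumCompl_symm_apply_of_mem h]
  have hΦnot : ∀ (p : D) v (h : v ∉ S'), ((Φ p) v : ℕ) = (p.2.1 ⟨v, h⟩ : ℕ) := by
    intro p v h
    simp [Φ, Equiv.Set.sumCompl_symm_apply_of_notMem h]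
  have hrange : Set.range Φ = peakLabelings G S' := by
    ext ℓ
    constructor
    · rintro ⟨p, rfl⟩
      show peakSet G (Φ p) = S'
      rw [key]
      constructor
      · intro v
        by_cases h : v ∈ S'
        · simp only [h, true_iff]
          rw [hΦmem p v h]
          omega
        · simp only [h, false_iff]
          rw [not_le, hΦnot p v h]
          have := (p.2.1 ⟨v, h⟩).isLt
          omega
      · obtain ⟨u, hu⟩ := p.2.2
        refine ⟨u, ?_⟩
        have hnot : (Sum.inl u : Fin k ⊕ Fin (n - k)) ∉ S' := hinl_not u
        have h2 : (⟨Sum.inl u, hnot⟩ : ↥S'ᶜ) = p.2.1.symm (Fin.last c) :=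
          Subtype.ext hu.symm
        rw [hΦnot p _ hnot, h2, Equiv.apply_symm_apply, Fin.val_last]
    · intro hℓ
      have hkey := (key ℓ).1 hℓ
      obtain ⟨hmem, u₀, hu₀⟩ := hkey
      let topE : {j : Fin (Fintype.card (Fin k ⊕ Fin (n - k))) // c + 1 ≤ (j : ℕ)} ≃ Fin m :=
        { toFun := fun j => ⟨(j.1 : ℕ) - (c + 1), by
            have h1 := j.1.isLt
            have h2 := j.2
            omega⟩
          invFun := fun i => ⟨⟨c + 1 + (i : ℕ), by have := i.isLt; omega⟩, by simp⟩
          left_inv := fun j => by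
            apply Subtype.ext
            apply Fin.val_injective
            have h2 := j.2
            show c + 1 + ((j.1 : ℕ) - (c + 1)) = (j.1 : ℕ)
            omega
          right_inv := fun i => by
            apply Fin.val_injective
            show c + 1 + (i : ℕ) - (c + 1) = (i : ℕ)
            omega }
      let lowE : {j : Fin (Fintype.card (Fin k ⊕ Fin (n - k))) // ¬ c + 1 ≤ (j : ℕ)} ≃ Fin (c + 1) :=
        { toFun := fun j => ⟨(j.1 : ℕ), by have := j.2; omega⟩
          invFun := fun i => ⟨⟨(i : ℕ), by have := i.isLt; omega⟩, by
            have := i.isLt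
            show ¬ c + 1 ≤ (i : ℕ)
            omega⟩
          left_inv := fun j => Subtype.ext (Fin.val_injective rfl)
          right_inv := fun i => Fin.val_injective rfl }
      let eS : ↥S' ≃ {j : Fin (Fintype.card (Fin k ⊕ Fin (n - k))) // c + 1 ≤ (j : ℕ)} :=
        Equiv.subtypeEquiv ℓ hmem
      let eC : ↥S'ᶜ ≃ {j : Fin (Fintype.card (Fin k ⊕ Fin (n - k))) // ¬ c + 1 ≤ (j : ℕ)} :=
        Equiv.subtypeEquiv ℓ (fun v => by
          rw [Set.mem_compl_iff]
          exact not_iff_not.2 (hmem v))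
      let f : ↥S' ≃ Fin m := eS.trans topE
      let g : ↥S'ᶜ ≃ Fin (c + 1) := eC.trans lowE
      have hgl : g ⟨Sum.inl u₀, hinl_not u₀⟩ = Fin.last c := by
        apply Fin.val_injective
        show ((ℓ (Sum.inl u₀)) : ℕ) = (Fin.last c : ℕ)
        rw [hu₀, Fin.val_last]
      have hgcond : g.symm (Fin.last c) ∈ A := by
        rw [← hgl, Equiv.symm_apply_apply]
        exact ⟨u₀, rfl⟩
      refine ⟨⟨f, ⟨g, hgcond⟩⟩, ?_⟩
      apply Equiv.ext
      intro v
      apply Fin.val_injective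
      by_cases h : v ∈ S'
      · rw [hΦmem ⟨f, ⟨g, hgcond⟩⟩ v h]
        have hval : ((f ⟨v, h⟩ : Fin m) : ℕ) = (ℓ v : ℕ) - (c + 1) := rfl
        have hge := (hmem v).1 h
        rw [hval]
        omega
      · rw [hΦnot ⟨f, ⟨g, hgcond⟩⟩ v h]
        rfl
  have hinj : Function.Injective Φ := by
    rintro ⟨f, g, hg⟩ ⟨f', g', hg'⟩ h
    have hv : ∀ v, ((Φ ⟨f, ⟨g, hg⟩⟩) v : ℕ) = ((Φ ⟨f', ⟨g', hg'⟩⟩) v : ℕ) := fun v => by rw [h]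
    have hf : f = f' := by
      apply Equiv.ext
      rintro ⟨v, hmemv⟩
      have h1 := hv v
      rw [hΦmem ⟨f, ⟨g, hg⟩⟩ v hmemv, hΦmem ⟨f', ⟨g', hg'⟩⟩ v hmemv] at h1
      have h1' : (c + 1) + ((f ⟨v, hmemv⟩ : Fin m) : ℕ)
          = (c + 1) + ((f' ⟨v, hmemv⟩ : Fin m) : ℕ) := h1
      exact Fin.val_injective (by omega)
    have hgeq : g = g' := by
      apply Equiv.ext
      rintro ⟨v, hmemv⟩
      have h1 := hv v
      rw [hΦnot ⟨f, ⟨g, hg⟩⟩ v hmemv, hΦnot ⟨f', ⟨g', hg'⟩⟩ v hmemv] at h1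
      exact Fin.val_injective h1
    cases hf
    cases hgeq
    rfl
  have hcardS' : Fintype.card ↥S' = m := by
    rw [← Nat.card_eq_fintype_card, Nat.card_coe_set_eq, hS'm]
  have hWc : Fintype.card ↥(S'ᶜ) = c + 1 := by
    rw [Fintype.card_compl_set, hcardS', hNn]
    omega
  have hAcard : A.ncard = k := by
    rw [← Nat.card_coe_set_eq]
    have e : Fin k ≃ ↥A := by
      refine Equiv.ofBijective (fun u => ⟨⟨Sum.inl u, hinl_not u⟩, ⟨u, rfl⟩⟩) ⟨?_, ?_⟩
      · intro u u' huu
        simp only [Subtype.mk.injEq, Sum.inl.injEq] at huu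
        exact huu
      · rintro ⟨⟨w, hw⟩, u, hu⟩
        refine ⟨u, ?_⟩
        apply Subtype.ext
        apply Subtype.ext
        exact hu.symm
    rw [Nat.card_congr e.symm, Nat.card_eq_fintype_card, Fintype.card_fin]
  rw [← Nat.card_coe_set_eq, ← hrange, Nat.card_range_of_injective hinj, Nat.card_prod]
  have hD1 : Nat.card (↥S' ≃ Fin m) = Nat.factorial m := by
    rw [Nat.card_eq_fintype_card, Fintype.card_equiv (Fintype.equivFinOfCardEq hcardS'), hcardS']
  have hD2 := card_symm_last_mem hWc A
  rw [hD1, hD2, hAcard, ← mul_assoc]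
end

section
/- Let n ≥ 2 and m ≥ 1, and let F_{n,m} = P_n ∨ K̄_m be the fan graph on n+m vertices, where P_n is the path graph on n vertices. For any nonempty S contained in V(K̄_m), |P(S; F_{n,m})| = |S|! · n · (n + m − |S| − 1)!. -/
open SimpleGraph

section Aux

open Equiv Set Nat

variable {α β : Type*}

/-- Decompose a bijection preserving a set into bijections of the set and its complement. -/
noncomputable def splitEquiv (T : Set α) (U : Set β) :
    {ℓ : α ≃ β // ∀ a, a ∈ T ↔ ℓ a ∈ U} ≃ (T ≃ U) × ((Tᶜ : Set α) ≃ (Uᶜ : Set β)) := by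
  classical
  exact
  { toFun := fun ℓ => (ℓ.1.subtypeEquiv fun a => ℓ.2 a,
      ℓ.1.subtypeEquiv fun a => not_congr (ℓ.2 a))
    invFun := fun p => ⟨(Equiv.Set.sumCompl T).symm.trans ((p.1.sumCongr p.2).trans
      (Equiv.Set.sumCompl U)), by
        intro a
        by_cases h : a ∈ T
        · simp [Equiv.Set.sumCompl_symm_apply_of_mem h, h, Subtype.coe_prop]
        · have : ∀ x : (Uᶜ : Set β), (x : β) ∉ U := fun x => x.2
          simp [Equiv.Set.sumCompl_symm_apply_of_notMem h, h, this]⟩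
    left_inv := by
      intro ℓ
      ext a
      by_cases h : a ∈ T
      · simp [Equiv.Set.sumCompl_symm_apply_of_mem h]
      · simp [Equiv.Set.sumCompl_symm_apply_of_notMem h]
    right_inv := by
      rintro ⟨e₁, e₂⟩
      refine Prod.ext ?_ ?_
      · ext x
        simp [Equiv.Set.sumCompl_symm_apply_of_mem x.2]
      · ext x
        simp [Equiv.Set.sumCompl_symm_apply_of_notMem x.2] }

lemma natCard_equiv_eq [Finite α] [Finite β] (h : Nat.card α = Nat.card β) :
    Nat.card (α ≃ β) = (Nat.card α) ! := by
  classical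
  have := Fintype.ofFinite α
  have := Fintype.ofFinite β
  simp only [Nat.card_eq_fintype_card] at h ⊢
  rw [Fintype.card_equiv (Fintype.equivOfCardEq h)]

lemma natCard_split (T : Set α) (U : Set β) [Finite α] [Finite β]
    (hT : Nat.card T = Nat.card U) (hTc : Nat.card (Tᶜ : Set α) = Nat.card (Uᶜ : Set β)) :
    Nat.card {ℓ : α ≃ β // ∀ a, a ∈ T ↔ ℓ a ∈ U} =
      (Nat.card T) ! * (Nat.card (Tᶜ : Set α)) ! := by
  rw [Nat.card_congr (splitEquiv T U), Nat.card_prod, natCard_equiv_eq hT, natCard_equiv_eq hTc]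

lemma natCard_fix_one [Finite α] [Finite β] (h : Nat.card α = Nat.card β)
    (a₀ : α) (b₀ : β) :
    Nat.card {e : α ≃ β // e a₀ = b₀} = (Nat.card α - 1) ! := by
  have key : ∀ e : α ≃ β, e a₀ = b₀ ↔ ∀ a, a ∈ ({a₀} : Set α) ↔ e a ∈ ({b₀} : Set β) := by
    intro e
    constructor
    · intro he a
      simp only [Set.mem_singleton_iff]
      constructor
      · rintro rfl; exact he
      · intro h'; exact e.injective (h'.trans he.symm)
    · intro h'
      exact (h' a₀).1 rfl
  rw [Nat.card_congr (Equiv.subtypeEquivRight key)]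
  rw [natCard_split]
  · have h1 : Nat.card ({a₀} : Set α) = 1 := by
      rw [Nat.card_coe_set_eq, Set.ncard_singleton]
    have h2 : Nat.card (({a₀}ᶜ : Set α)) = Nat.card α - 1 := by
      rw [Nat.card_coe_set_eq]
      have := Set.ncard_add_ncard_compl ({a₀} : Set α)
      rw [Set.ncard_singleton] at this
      omega
    rw [h1, h2, Nat.factorial_one, one_mul]
  · rw [Nat.card_coe_set_eq, Nat.card_coe_set_eq, Set.ncard_singleton, Set.ncard_singleton]
  · rw [Nat.card_coe_set_eq, Nat.card_coe_set_eq]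
    have hA := Set.ncard_add_ncard_compl ({a₀} : Set α)
    have hB := Set.ncard_add_ncard_compl ({b₀} : Set β)
    rw [Set.ncard_singleton] at hA hB
    omega

lemma natCard_symm_mem [Finite α] [Finite β] (h : Nat.card α = Nat.card β)
    (b₀ : β) (A : Set α) :
    Nat.card {e : α ≃ β // e.symm b₀ ∈ A} = A.ncard * (Nat.card α - 1) ! := by
  classical
  have := Fintype.ofFinite α
  have := Fintype.ofFinite β
  set s := {e : α ≃ β // e.symm b₀ ∈ A}
  have : s ≃ Σ a : A, {e : α ≃ β // e (a : α) = b₀} := by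
    refine (Equiv.sigmaFiberEquiv (fun e : s => (⟨e.1.symm b₀, e.2⟩ : A))).symm.trans
      (Equiv.sigmaCongrRight fun a => ?_)
    refine ?_
    -- {x : s // ⟨x.1.symm b₀, _⟩ = a} ≃ {e // e a = b₀}
    refine Equiv.ofBijective (fun x => ⟨x.1.1, ?_⟩) ⟨?_, ?_⟩
    · have : x.1.1.symm b₀ = (a : α) := congrArg Subtype.val x.2
      rw [← this, Equiv.apply_symm_apply]
    · rintro ⟨⟨e, he⟩, hx⟩ ⟨⟨e', he'⟩, hx'⟩ hee
      simp only [Subtype.mk.injEq] at hee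
      exact Subtype.ext (Subtype.ext hee)
    · rintro ⟨e, he⟩
      have hmem : e.symm b₀ ∈ A := by
        have : e.symm b₀ = (a : α) := by rw [← he, Equiv.symm_apply_apply]
        rw [this]; exact a.2
      refine ⟨⟨⟨e, hmem⟩, ?_⟩, rfl⟩
      apply Subtype.ext
      show e.symm b₀ = (a : α)
      rw [← he, Equiv.symm_apply_apply]
  rw [Nat.card_congr this, Nat.card_eq_fintype_card, Fintype.card_sigma]
  have : ∀ a : A, Fintype.card {e : α ≃ β // e (a : α) = b₀} = (Nat.card α - 1) ! := by
    intro a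
    rw [← Nat.card_eq_fintype_card, natCard_fix_one h]
  simp only [this, Finset.sum_const, Finset.card_univ, smul_eq_mul]
  rw [← Nat.card_eq_fintype_card, Nat.card_coe_set_eq]

@[simp] lemma splitEquiv_snd {T : Set α} {U : Set β}
    (ℓ : {ℓ : α ≃ β // ∀ a, a ∈ T ↔ ℓ a ∈ U}) :
    (splitEquiv T U ℓ).2 = ℓ.1.subtypeEquiv fun a => not_congr (ℓ.2 a) := rfl

lemma natCard_main [Finite α] [Finite β] (T : Set α) (U : Set β)
    (hT : Nat.card T = Nat.card U) (hTc : Nat.card (Tᶜ : Set α) = Nat.card (Uᶜ : Set β))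
    (b₀ : β) (hb₀ : b₀ ∈ Uᶜ) (A : Set α) (hA : A ⊆ Tᶜ) :
    Nat.card {ℓ : α ≃ β // (∀ a, a ∈ T ↔ ℓ a ∈ U) ∧ ℓ.symm b₀ ∈ A} =
      (Nat.card T) ! * (A.ncard * (Nat.card (Tᶜ : Set α) - 1) !) := by
  classical
  set p : (α ≃ β) → Prop := fun ℓ => ∀ a, a ∈ T ↔ ℓ a ∈ U with hp
  set A' : Set (Tᶜ : Set α) := Subtype.val ⁻¹' A with hA'
  have E1 : {ℓ : α ≃ β // p ℓ ∧ ℓ.symm b₀ ∈ A} ≃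
      {x : Subtype p // x.1.symm b₀ ∈ A} :=
    (Equiv.subtypeSubtypeEquivSubtypeInter p (fun ℓ => ℓ.symm b₀ ∈ A)).symm
  have E2 : {x : Subtype p // x.1.symm b₀ ∈ A} ≃
      {y : (T ≃ U) × ((Tᶜ : Set α) ≃ (Uᶜ : Set β)) // y.2.symm ⟨b₀, hb₀⟩ ∈ A'} := by
    refine (splitEquiv T U).subtypeEquiv fun x => ?_
    rw [splitEquiv_snd, Equiv.subtypeEquiv_symm]
    exact Iff.rfl
  have E3 : {y : (T ≃ U) × ((Tᶜ : Set α) ≃ (Uᶜ : Set β)) // y.2.symm ⟨b₀, hb₀⟩ ∈ A'} ≃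
      {e : (Tᶜ : Set α) ≃ (Uᶜ : Set β) // e.symm ⟨b₀, hb₀⟩ ∈ A'} × (T ≃ U) :=
    { toFun := fun y => (⟨y.1.2, y.2⟩, y.1.1)
      invFun := fun z => ⟨(z.2, z.1.1), z.1.2⟩
      left_inv := fun y => rfl
      right_inv := fun z => rfl }
  rw [Nat.card_congr (E1.trans (E2.trans E3)), Nat.card_prod,
    natCard_symm_mem hTc, natCard_equiv_eq hT]
  have hA'card : A'.ncard = A.ncard := by
    rw [← Set.ncard_image_of_injective A' Subtype.coe_injective, hA',
      Set.image_preimage_eq_inter_range, Subtype.range_coe]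
    congr 1
    exact Set.inter_eq_left.mpr hA
  rw [hA'card, mul_comm ((Nat.card ↥T)!)]

lemma top_block {V : Type*} [Finite V] {N : ℕ} (ℓ : V ≃ Fin N) (T : Set V)
    (hdom : ∀ v ∈ T, ∀ w ∉ T, (ℓ w : ℕ) < ℓ v) :
    ∀ v, v ∈ T ↔ N - T.ncard ≤ (ℓ v : ℕ) := by
  classical
  have hN : Nat.card V = N := by
    rw [Nat.card_congr ℓ, Nat.card_eq_fintype_card, Fintype.card_fin]
  have hcompl : T.ncard + (Tᶜ : Set V).ncard = N := by
    rw [Set.ncard_add_ncard_compl]; exact hN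
  intro v
  constructor
  · intro hv
    have := Nat.card_le_card_of_injective
        (fun w : (Tᶜ : Set V) => (⟨ℓ w, hdom v hv w w.2⟩ : Fin (ℓ v : ℕ)))
        (by
          intro w w' hww
          simp only [Fin.mk.injEq] at hww
          exact Subtype.ext (ℓ.injective (Fin.ext hww)))
    rw [Nat.card_coe_set_eq, Nat.card_eq_fintype_card, Fintype.card_fin] at this
    omega
  · intro hv
    by_contra hvT
    have := Nat.card_le_card_of_injective
        (fun w : T => (⟨(ℓ w : ℕ) - (ℓ v : ℕ) - 1, by
          have h1 := hdom w w.2 v hvT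
          have h2 := (ℓ (w : V)).isLt
          omega⟩ : Fin (N - 1 - (ℓ v : ℕ))))
        (by
          intro w w' hww
          have h1 := hdom w w.2 v hvT
          have h2 := hdom w' w'.2 v hvT
          simp only [Fin.mk.injEq] at hww
          exact Subtype.ext (ℓ.injective (Fin.ext (by omega))))
    rw [Nat.card_coe_set_eq, Nat.card_eq_fintype_card, Fintype.card_fin] at this
    have h3 := (ℓ v).isLt
    omega

lemma card_top {N s : ℕ} (hs : s ≤ N) :
    Nat.card ({k : Fin N | N - s ≤ (k : ℕ)} : Set (Fin N)) = s := by
  have e : Fin s ≃ ({k : Fin N | N - s ≤ (k : ℕ)} : Set (Fin N)) :=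
    { toFun := fun i => ⟨⟨N - s + (i : ℕ), by omega⟩, by
        simp only [Set.mem_setOf_eq]
        omega⟩
      invFun := fun k => ⟨((k : Fin N) : ℕ) - (N - s), by
        have h1 : N - s ≤ ((k : Fin N) : ℕ) := k.2
        have h2 := ((k : Fin N)).isLt
        omega⟩
      left_inv := fun i => by
        apply Fin.ext
        simp only [Fin.val_mk]
        omega
      right_inv := fun k => by
        have h1 : N - s ≤ ((k : Fin N) : ℕ) := k.2
        apply Subtype.ext
        apply Fin.ext
        simp only [Fin.val_mk]
        omega }
  rw [← Nat.card_congr e, Nat.card_eq_fintype_card, Fintype.card_fin]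

section Fan

open SimpleGraph

variable {n m : ℕ}

lemma adj_inr (j : Fin m) (w : Fin n ⊕ Fin m) :
    (graphJoin (pathGraph' n) (⊥ : SimpleGraph (Fin m))).Adj (Sum.inr j) w ↔
      ∃ i, w = Sum.inl i := by
  cases w with
  | inl i => exact ⟨fun _ => ⟨i, rfl⟩, fun _ => trivial⟩
  | inr j' => exact ⟨fun h => h.elim, fun ⟨i, hi⟩ => (Sum.inr_ne_inl hi).elim⟩

lemma adj_inl_inr (i : Fin n) (j : Fin m) :
    (graphJoin (pathGraph' n) (⊥ : SimpleGraph (Fin m))).Adj (Sum.inl i) (Sum.inr j) :=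
  trivial

lemma ncard_range_inl : (Set.range (Sum.inl : Fin n → Fin n ⊕ Fin m)).ncard = n := by
  rw [← Set.image_univ, Set.ncard_image_of_injective _ Sum.inl_injective, Set.ncard_univ,
    Nat.card_eq_fintype_card, Fintype.card_fin]

lemma nbr_inr (j : Fin m) :
    (graphJoin (pathGraph' n) (⊥ : SimpleGraph (Fin m))).neighborSet (Sum.inr j) =
      Set.range (Sum.inl : Fin n → Fin n ⊕ Fin m) := by
  ext w
  rw [SimpleGraph.mem_neighborSet, adj_inr]
  constructor
  · rintro ⟨i, rfl⟩; exact ⟨i, rfl⟩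
  · rintro ⟨i, rfl⟩; exact ⟨i, rfl⟩

lemma fan_char {N : ℕ} (hn : 2 ≤ n) (S : Set (Fin m)) (hS : S.Nonempty)
    (hsN : S.ncard < N)
    (ℓ : (Fin n ⊕ Fin m) ≃ Fin N) (b₀ : Fin N) (hb₀ : (b₀ : ℕ) = N - S.ncard - 1) :
    peakSet (graphJoin (pathGraph' n) (⊥ : SimpleGraph (Fin m))) ℓ = Sum.inr '' S ↔
      ((∀ v, v ∈ (Sum.inr '' S : Set (Fin n ⊕ Fin m)) ↔ N - S.ncard ≤ (ℓ v : ℕ)) ∧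
        ℓ.symm b₀ ∈ Set.range (Sum.inl : Fin n → Fin n ⊕ Fin m)) := by
  classical
  set G := graphJoin (pathGraph' n) (⊥ : SimpleGraph (Fin m)) with hG
  have hs1 : 1 ≤ S.ncard := (Set.ncard_pos (Set.toFinite S)).mpr hS
  have hdeg : ∀ j : Fin m, 2 ≤ (G.neighborSet (Sum.inr j)).ncard := by
    intro j
    rw [hG, nbr_inr, ncard_range_inl]
    exact hn
  have hTcard : (Sum.inr '' S : Set (Fin n ⊕ Fin m)).ncard = S.ncard :=
    Set.ncard_image_of_injective S Sum.inr_injective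
  constructor
  · intro h
    have P1 : ∀ j ∈ S, ∀ i : Fin n, (ℓ (Sum.inl i) : ℕ) < ℓ (Sum.inr j) := by
      intro j hj i
      have hpk : Sum.inr j ∈ peakSet G ℓ := by rw [h]; exact ⟨j, hj, rfl⟩
      exact hpk.2 (Sum.inl i) trivial
    have P2 : ∀ j ∉ S, ∃ i : Fin n, (ℓ (Sum.inr j) : ℕ) < ℓ (Sum.inl i) := by
      intro j hj
      have hnpk : Sum.inr j ∉ peakSet G ℓ := by
        rw [h]
        rintro ⟨j', hj', heq⟩
        cases Sum.inr.inj heq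
        exact hj hj'
      by_contra hno
      push_neg at hno
      apply hnpk
      refine ⟨hdeg j, ?_⟩
      rintro w hw
      rcases (adj_inr j w).1 hw with ⟨i, rfl⟩
      have hne : ℓ (Sum.inl i) ≠ ℓ (Sum.inr j) := fun hc =>
        Sum.inl_ne_inr (ℓ.injective hc)
      exact lt_of_le_of_ne (hno i) hne
    have hdom : ∀ v ∈ (Sum.inr '' S : Set (Fin n ⊕ Fin m)),
        ∀ w ∉ (Sum.inr '' S : Set (Fin n ⊕ Fin m)), (ℓ w : ℕ) < ℓ v := by
      rintro v ⟨j, hj, rfl⟩ w hw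
      cases w with
      | inl i => exact P1 j hj i
      | inr j' =>
        have hj' : j' ∉ S := fun hj'' => hw ⟨j', hj'', rfl⟩
        obtain ⟨i, hi⟩ := P2 j' hj'
        exact lt_trans hi (P1 j hj i)
    have hiff := top_block ℓ _ hdom
    rw [hTcard] at hiff
    refine ⟨hiff, ?_⟩
    rcases hv : ℓ.symm b₀ with i | j
    · exact ⟨i, rfl⟩
    · exfalso
      have hℓv : (ℓ (Sum.inr j) : ℕ) = N - S.ncard - 1 := by
        rw [← hv, Equiv.apply_symm_apply, hb₀]
      have hjS : j ∉ S := by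
        intro hj
        have := (hiff (Sum.inr j)).1 ⟨j, hj, rfl⟩
        omega
      obtain ⟨i, hi⟩ := P2 j hjS
      have hnotin : ¬ (N - S.ncard ≤ (ℓ (Sum.inl i) : ℕ)) := by
        intro hle
        rcases (hiff (Sum.inl i)).2 hle with ⟨j', _, heq⟩
        exact Sum.inr_ne_inl heq
      omega
  · rintro ⟨h1, i₀, hi₀⟩
    have hℓi₀ : (ℓ (Sum.inl i₀) : ℕ) = N - S.ncard - 1 := by
      rw [hi₀, Equiv.apply_symm_apply, hb₀]
    have hinl_lt : ∀ i : Fin n, (ℓ (Sum.inl i) : ℕ) < N - S.ncard := by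
      intro i
      by_contra hle
      push_neg at hle
      rcases (h1 (Sum.inl i)).2 hle with ⟨j', _, heq⟩
      exact Sum.inr_ne_inl heq
    ext v
    cases v with
    | inl i =>
      apply iff_of_false
      · intro hpk
        obtain ⟨j₀, hj₀⟩ := hS
        have hlt : (ℓ (Sum.inr j₀) : ℕ) < ℓ (Sum.inl i) :=
          hpk.2 (Sum.inr j₀) (adj_inl_inr i j₀)
        have hge : N - S.ncard ≤ (ℓ (Sum.inr j₀) : ℕ) := (h1 _).1 ⟨j₀, hj₀, rfl⟩
        have := hinl_lt i
        omega
      · rintro ⟨j, _, heq⟩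
        exact Sum.inr_ne_inl heq
    | inr j =>
      by_cases hj : j ∈ S
      · apply iff_of_true
        · refine ⟨hdeg j, ?_⟩
          intro w hw
          rcases (adj_inr j w).1 hw with ⟨i, rfl⟩
          have h2 : N - S.ncard ≤ (ℓ (Sum.inr j) : ℕ) := (h1 _).1 ⟨j, hj, rfl⟩
          have h3 := hinl_lt i
          show (ℓ (Sum.inl i) : ℕ) < (ℓ (Sum.inr j) : ℕ)
          omega
        · exact ⟨j, hj, rfl⟩
      · apply iff_of_false
        · intro hpk
          have hlt : (ℓ (Sum.inl i₀) : ℕ) < ℓ (Sum.inr j) :=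
            hpk.2 (Sum.inl i₀) (adj_inl_inr i₀ j)
          have h2 : ¬ (N - S.ncard ≤ (ℓ (Sum.inr j) : ℕ)) := by
            intro hle
            rcases (h1 _).2 hle with ⟨j', hj', heq⟩
            cases Sum.inr.inj heq
            exact hj hj'
          omega
        · rintro ⟨j', hj', heq⟩
          cases Sum.inr.inj heq
          exact hj hj'

end Fan

/-- for the fan graph `F_{n,m} = P_n ∨ K̄_m` with `n ≥ 2`, `m ≥ 1`,
and nonempty `S ⊆ V(K̄_m)`, `|P(S; F_{n,m})| = |S|! ⬝ n ⬝ (n + m − |S| − 1)!`. -/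
theorem fan_peak_count (n m : ℕ) (hn : 2 ≤ n) (hm : 1 ≤ m)
    (S : Set (Fin m)) (hS : S.Nonempty) :
    (peakLabelings (graphJoin (pathGraph' n) (⊥ : SimpleGraph (Fin m)))
        (Sum.inr '' S)).ncard =
      Nat.factorial S.ncard * n * Nat.factorial (n + m - S.ncard - 1) := by
  classical
  set N := Fintype.card (Fin n ⊕ Fin m) with hNdef
  have hN : N = n + m := by simp [hNdef]
  have hs1 : 1 ≤ S.ncard := (Set.ncard_pos (Set.toFinite S)).mpr hS
  have hsm : S.ncard ≤ m := by
    have := Set.ncard_le_ncard (Set.subset_univ S) Set.finite_univ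
    rwa [Set.ncard_univ, Nat.card_eq_fintype_card, Fintype.card_fin] at this
  have hsN : S.ncard < N := by omega
  set T : Set (Fin n ⊕ Fin m) := Sum.inr '' S with hT
  set U : Set (Fin N) := {k : Fin N | N - S.ncard ≤ (k : ℕ)} with hU
  set A : Set (Fin n ⊕ Fin m) := Set.range Sum.inl with hA
  set b₀ : Fin N := ⟨N - S.ncard - 1, by omega⟩ with hb₀def
  have hTcard : Nat.card T = S.ncard := by
    rw [Nat.card_coe_set_eq, hT, Set.ncard_image_of_injective S Sum.inr_injective]
  have hUcard : Nat.card U = S.ncard := card_top (le_of_lt hsN)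
  have hTcard' := hTcard
  rw [Nat.card_coe_set_eq] at hTcard'
  have hUcard' := hUcard
  rw [Nat.card_coe_set_eq] at hUcard'
  have hTc : Nat.card (Tᶜ : Set (Fin n ⊕ Fin m)) = N - S.ncard := by
    have h := Set.ncard_add_ncard_compl T
    rw [Nat.card_eq_fintype_card] at h
    rw [Nat.card_coe_set_eq]
    omega
  have hUc : Nat.card (Uᶜ : Set (Fin N)) = N - S.ncard := by
    have h := Set.ncard_add_ncard_compl U
    rw [Nat.card_eq_fintype_card, Fintype.card_fin] at h
    rw [Nat.card_coe_set_eq]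
    omega
  have hb₀val : (b₀ : ℕ) = N - S.ncard - 1 := rfl
  have hb₀U : b₀ ∈ Uᶜ := by
    intro hc
    rw [hU, Set.mem_setOf_eq, hb₀val] at hc
    omega
  have hAsub : A ⊆ Tᶜ := by
    rintro _ ⟨i, rfl⟩ ⟨j, hj, heq⟩
    exact Sum.inr_ne_inl heq
  have hAcard : A.ncard = n := ncard_range_inl
  have step1 : (peakLabelings (graphJoin (pathGraph' n) (⊥ : SimpleGraph (Fin m))) T).ncard =
      Nat.card {ℓ : (Fin n ⊕ Fin m) ≃ Fin N //
        (∀ a, a ∈ T ↔ ℓ a ∈ U) ∧ ℓ.symm b₀ ∈ A} := by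
    rw [← Nat.card_coe_set_eq]
    exact Nat.card_congr (Equiv.subtypeEquivRight fun ℓ =>
      fan_char hn S hS hsN ℓ b₀ hb₀val)
  rw [step1, natCard_main T U (by rw [hTcard, hUcard]) (by rw [hTc, hUc]) b₀ hb₀U A hAsub,
    hTcard, hAcard, hTc, hN]
  rw [← mul_assoc]
end Aux
end

section
/- Let n ≥ 3 and m ≥ 1, and let C_{m,n} = C_n ∨ K̄_m be the m-gonal n-cone graph on n+m vertices. For any nonempty S contained in V(K̄_m), |P(S; C_{m,n})| = |S|! · n · (n + m − |S| − 1)!. -/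
open SimpleGraph

open Classical in
/-- Splitting an equivalence that respects predicates `p`, `q` into its two restrictions. -/
noncomputable def equivSplit {α β : Type*} (p : α → Prop) (q : β → Prop) :
    {e : α ≃ β // ∀ a, p a ↔ q (e a)} ≃
      (({a // p a} ≃ {b // q b}) × ({a // ¬ p a} ≃ {b // ¬ q b})) where
  toFun x := (x.1.subtypeEquiv x.2, x.1.subtypeEquiv fun a => not_congr (x.2 a))
  invFun y := ⟨(Equiv.sumCompl p).symm.trans ((y.1.sumCongr y.2).trans (Equiv.sumCompl q)), by
    intro a
    by_cases h : p a
    · simp [Equiv.sumCompl_symm_apply_of_pos h, h]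
      exact (y.1 ⟨a, h⟩).2
    · simp [Equiv.sumCompl_symm_apply_of_neg h, h]
      exact (y.2 ⟨a, h⟩).2⟩
  left_inv x := by
    apply Subtype.ext
    apply Equiv.ext
    intro a
    by_cases h : p a
    · simp [Equiv.sumCompl_symm_apply_of_pos h, Equiv.subtypeEquiv]
    · simp [Equiv.sumCompl_symm_apply_of_neg h, Equiv.subtypeEquiv]
  right_inv y := by
    apply Prod.ext
    · apply Equiv.ext
      rintro ⟨a, ha⟩
      apply Subtype.ext
      simp [Equiv.subtypeEquiv, Equiv.sumCompl_symm_apply_of_pos ha]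
    · apply Equiv.ext
      rintro ⟨a, ha⟩
      apply Subtype.ext
      simp [Equiv.subtypeEquiv, Equiv.sumCompl_symm_apply_of_neg ha]

open Classical in
lemma nat_card_equiv {α β : Type*} [Finite α] [Finite β] (h : Nat.card α = Nat.card β) :
    Nat.card (α ≃ β) = (Nat.card α).factorial := by
  letI := Fintype.ofFinite α
  letI := Fintype.ofFinite β
  simp only [Nat.card_eq_fintype_card] at h ⊢
  exact Fintype.card_equiv (Fintype.equivOfCardEq h)

open Classical in
lemma nat_card_equiv_fix {α β : Type*} [Finite α] [Finite β] (h : Nat.card α = Nat.card β)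
    (a₀ : α) (b₀ : β) :
    Nat.card {f : α ≃ β // f a₀ = b₀} = (Nat.card α - 1).factorial := by
  letI := Fintype.ofFinite α
  letI := Fintype.ofFinite β
  have e1 : {f : α ≃ β // f a₀ = b₀} ≃ {f : α ≃ β // ∀ a, a = a₀ ↔ f a = b₀} := by
    apply Equiv.subtypeEquivRight
    intro f
    constructor
    · rintro hf a
      constructor
      · rintro rfl; exact hf
      · intro h2; exact f.injective (h2.trans hf.symm)
    · intro hf; exact (hf a₀).1 rfl
  rw [Nat.card_congr (e1.trans (equivSplit (· = a₀) (· = b₀))), Nat.card_prod]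
  have h1 : Nat.card ({a // a = a₀} ≃ {b // b = b₀}) = 1 := by
    rw [nat_card_equiv]
    · have : Nat.card {a // a = a₀} = 1 := by
        rw [Nat.card_eq_fintype_card]; exact Fintype.card_subtype_eq a₀
      rw [this]; rfl
    · rw [Nat.card_eq_fintype_card, Nat.card_eq_fintype_card,
        Fintype.card_subtype_eq, Fintype.card_subtype_eq]
  have h2 : Nat.card {a // ¬ a = a₀} = Nat.card α - 1 := by
    rw [Nat.card_eq_fintype_card, Fintype.card_subtype_compl, Fintype.card_subtype_eq,
      Nat.card_eq_fintype_card]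
  have h3 : Nat.card {b // ¬ b = b₀} = Nat.card β - 1 := by
    rw [Nat.card_eq_fintype_card, Fintype.card_subtype_compl, Fintype.card_subtype_eq,
      Nat.card_eq_fintype_card]
  rw [h1, nat_card_equiv (by rw [h2, h3, h]), h2, one_mul]

open Classical in
lemma nat_card_equiv_subtype {α β : Type*} [Finite α] [Finite β]
    (h : Nat.card α = Nat.card β) (a₀ : α) (p : β → Prop) :
    Nat.card {f : α ≃ β // p (f a₀)} =
      Nat.card {b // p b} * (Nat.card α - 1).factorial := by
  have e1 : {f : α ≃ β // p (f a₀)} ≃ Σ b : {b // p b}, {f : α ≃ β // f a₀ = b.1} :=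
    { toFun := fun f => ⟨⟨f.1 a₀, f.2⟩, f.1, rfl⟩
      invFun := fun x => ⟨x.2.1, by rw [x.2.2]; exact x.1.2⟩
      left_inv := fun f => rfl
      right_inv := by
        rintro ⟨⟨b, hb⟩, f, hf⟩
        have hf' : f a₀ = b := hf
        subst hf'
        rfl }
  letI := Fintype.ofFinite α
  letI := Fintype.ofFinite β
  rw [Nat.card_congr e1]
  rw [Nat.card_eq_fintype_card, Fintype.card_sigma]
  have : ∀ b : {b // p b}, Fintype.card {f : α ≃ β // f a₀ = b.1}
      = (Nat.card α - 1).factorial := by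
    intro b
    rw [← Nat.card_eq_fintype_card, nat_card_equiv_fix h a₀ b.1]
  rw [Finset.sum_congr rfl fun b _ => this b, Finset.sum_const, Finset.card_univ,
    ← Nat.card_eq_fintype_card, smul_eq_mul]

lemma nat_card_fin_top (N c : ℕ) (hc : c ≤ N) :
    Nat.card {j : Fin N // c ≤ (j : ℕ)} = N - c := by
  have e : {j : Fin N // c ≤ (j : ℕ)} ≃ Fin (N - c) :=
    { toFun := fun j => ⟨(j : ℕ) - c, by omega⟩
      invFun := fun i => ⟨⟨(i : ℕ) + c, by omega⟩, by simp only [Fin.val_mk]; omega⟩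
      left_inv := fun j => by
        apply Subtype.ext; apply Fin.ext; have := j.2; simp; omega
      right_inv := fun i => by apply Fin.ext; simp }
  rw [Nat.card_congr e, Nat.card_eq_fintype_card, Fintype.card_fin]

lemma nat_card_fin_bot (N c : ℕ) (hc : c ≤ N) :
    Nat.card {j : Fin N // ¬ c ≤ (j : ℕ)} = c := by
  have e : {j : Fin N // ¬ c ≤ (j : ℕ)} ≃ Fin c :=
    { toFun := fun j => ⟨(j : ℕ), by omega⟩
      invFun := fun i => ⟨⟨(i : ℕ), by omega⟩, by simp only [Fin.val_mk]; omega⟩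
      left_inv := fun j => by apply Subtype.ext; apply Fin.ext; simp
      right_inv := fun i => by apply Fin.ext; simp }
  rw [Nat.card_congr e, Nat.card_eq_fintype_card, Fintype.card_fin]

lemma ncard_le_label {V : Type*} [Fintype V] {N : ℕ} (ℓ : V ≃ Fin N) {W : Set V} {v : V}
    (h : ∀ w ∈ W, ℓ w < ℓ v) : W.ncard ≤ (ℓ v : ℕ) := by
  have h1 : W.ncard = (ℓ '' W).ncard := (Set.ncard_image_of_injective W ℓ.injective).symm
  have h2 : ℓ '' W ⊆ ↑(Finset.Iio (ℓ v)) := by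
    rintro j ⟨w, hw, rfl⟩
    simp [h w hw]
  rw [h1]
  calc (ℓ '' W).ncard ≤ (↑(Finset.Iio (ℓ v)) : Set (Fin N)).ncard :=
        Set.ncard_le_ncard h2 (Set.toFinite _)
    _ = (Finset.Iio (ℓ v)).card := Set.ncard_coe_finset _
    _ = (ℓ v : ℕ) := Fin.card_Iio _

lemma label_add_ncard_lt {V : Type*} [Fintype V] {N : ℕ} (ℓ : V ≃ Fin N) {W : Set V} {v : V}
    (h : ∀ w ∈ W, ℓ v < ℓ w) : (ℓ v : ℕ) + W.ncard < N := by
  have h1 : W.ncard = (ℓ '' W).ncard := (Set.ncard_image_of_injective W ℓ.injective).symm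
  have h2 : ℓ '' W ⊆ ↑(Finset.Ioi (ℓ v)) := by
    rintro j ⟨w, hw, rfl⟩
    simp [h w hw]
  have h3 : (ℓ '' W).ncard ≤ N - 1 - (ℓ v : ℕ) :=
    le_of_le_of_eq (Set.ncard_le_ncard h2 (Set.toFinite _))
      ((Set.ncard_coe_finset _).trans (Fin.card_Ioi _))
  have h4 : (ℓ v : ℕ) < N := (ℓ v).isLt
  omega

/-- for the `m`-gonal `n`-cone graph `C_{m,n} = C_n ∨ K̄_m` with `n ≥ 3`,
`m ≥ 1`, and nonempty `S ⊆ V(K̄_m)`, `|P(S; C_{m,n})| = |S|! ⬝ n ⬝ (n + m − |S| − 1)!`. -/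
theorem cone_peak_count (n m : ℕ) (hn : 3 ≤ n) (hm : 1 ≤ m)
    (S : Set (Fin m)) (hS : S.Nonempty) :
    (peakLabelings (graphJoin (cycleGraph n) (⊥ : SimpleGraph (Fin m)))
        (Sum.inr '' S)).ncard =
      Nat.factorial S.ncard * n * Nat.factorial (n + m - S.ncard - 1) := by
  classical
  set G := graphJoin (cycleGraph n) (⊥ : SimpleGraph (Fin m)) with hG
  set k := S.ncard with hk
  have hN : Fintype.card (Fin n ⊕ Fin m) = n + m := by simp
  have hk1 : 1 ≤ k := (Set.ncard_pos (Set.toFinite S)).2 hS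
  have hkm : k ≤ m := by
    have h := Set.ncard_le_ncard (Set.subset_univ S) Set.finite_univ
    simpa [Set.ncard_univ] using h
  have hS'card : (Sum.inr '' S : Set (Fin n ⊕ Fin m)).ncard = k :=
    Set.ncard_image_of_injective S Sum.inr_injective
  -- basic adjacency
  have adj_lr : ∀ (i : Fin n) (j : Fin m), G.Adj (Sum.inl i) (Sum.inr j) := fun _ _ => trivial
  have adj_rl : ∀ (j : Fin m) (i : Fin n), G.Adj (Sum.inr j) (Sum.inl i) := fun _ _ => trivial
  have adj_rr : ∀ (j j' : Fin m), ¬ G.Adj (Sum.inr j) (Sum.inr j') := fun _ _ h => h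
  have deg2 : ∀ j : Fin m, 2 ≤ (G.neighborSet (Sum.inr j)).ncard := by
    intro j
    have h2 := (Set.one_lt_ncard (Set.toFinite (G.neighborSet (Sum.inr j)))).2
      ⟨Sum.inl ⟨0, by omega⟩, (G.mem_neighborSet _ _).2 (adj_rl j ⟨0, by omega⟩),
       Sum.inl ⟨1, by omega⟩, (G.mem_neighborSet _ _).2 (adj_rl j ⟨1, by omega⟩), by
        simp [Fin.ext_iff]⟩
    omega
  -- the predicates
  set p : (Fin n ⊕ Fin m) → Prop := (· ∈ (Sum.inr '' S : Set (Fin n ⊕ Fin m))) with hp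
  set q : Fin (Fintype.card (Fin n ⊕ Fin m)) → Prop := fun t => n + m - k ≤ (t : ℕ) with hq
  set pos : Fin (Fintype.card (Fin n ⊕ Fin m)) := ⟨n + m - k - 1, by rw [hN]; omega⟩ with hpos
  have hposval : (pos : ℕ) = n + m - k - 1 := rfl
  have hposq : ¬ q pos := by rw [hq]; simp only [hposval]; omega
  have hinl_notmem : ∀ i : Fin n, ¬ p (Sum.inl i) := by
    intro i hmem
    rw [hp] at hmem
    obtain ⟨s, _, hsi⟩ := hmem
    exact Sum.inr_ne_inl hsi
  -- characterization of the peak labelings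
  have hchar : peakLabelings G (Sum.inr '' S) =
      {ℓ | (∀ v, p v ↔ q (ℓ v)) ∧ ∃ i : Fin n, (ℓ (Sum.inl i) : ℕ) = n + m - k - 1} := by
    ext ℓ
    simp only [peakLabelings, Set.mem_setOf_eq]
    have peak_inr : ∀ j : Fin m,
        IsPeak G ℓ (Sum.inr j) ↔ ∀ i, ℓ (Sum.inl i) < ℓ (Sum.inr j) := by
      intro j
      constructor
      · exact fun h i => h.2 (Sum.inl i) (adj_rl j i)
      · intro h
        refine ⟨deg2 j, ?_⟩
        rintro (i | j') hadj
        · exact h i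
        · exact absurd hadj (adj_rr j j')
    constructor
    · -- forward
      intro hpe
      have h1 : ∀ s ∈ S, ∀ i, ℓ (Sum.inl i) < ℓ (Sum.inr s) := by
        intro s hs
        have hmem : Sum.inr s ∈ peakSet G ℓ := by rw [hpe]; exact ⟨s, hs, rfl⟩
        exact (peak_inr s).1 hmem
      have h2 : ∀ j ∉ S, ∃ i, ℓ (Sum.inr j) < ℓ (Sum.inl i) := by
        intro j hj
        have hnp : ¬ IsPeak G ℓ (Sum.inr j) := by
          intro hpk
          have : Sum.inr j ∈ peakSet G ℓ := hpk
          rw [hpe] at this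
          obtain ⟨s, hs, hsj⟩ := this
          exact hj (Sum.inr_injective hsj ▸ hs)
        have hnall : ¬ ∀ i, ℓ (Sum.inl i) < ℓ (Sum.inr j) := fun hc => hnp ((peak_inr j).2 hc)
        push_neg at hnall
        obtain ⟨i, hi⟩ := hnall
        refine ⟨i, lt_of_le_of_ne hi ?_⟩
        intro he
        exact Sum.inr_ne_inl (ℓ.injective he)
      have hbelow : ∀ v, v ∉ (Sum.inr '' S : Set (Fin n ⊕ Fin m)) →
          ∀ s ∈ S, ℓ v < ℓ (Sum.inr s) := by
        rintro (i | j) hv s hs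
        · exact h1 s hs i
        · have hj : j ∉ S := fun h => hv ⟨j, h, rfl⟩
          obtain ⟨i, hi⟩ := h2 j hj
          exact hi.trans (h1 s hs i)
      have part1 : ∀ v, p v ↔ q (ℓ v) := by
        intro v
        constructor
        · rintro ⟨s, hs, rfl⟩
          have hle := ncard_le_label ℓ (W := (Sum.inr '' S)ᶜ) (v := Sum.inr s)
            (fun w hw => hbelow w hw s hs)
          have hcompl := Set.ncard_add_ncard_compl (Sum.inr '' S : Set (Fin n ⊕ Fin m))
            (Set.toFinite _) (Set.toFinite _)
          rw [Nat.card_eq_fintype_card, hN, hS'card] at hcompl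
          rw [hq]
          omega
        · intro hqv
          by_contra hv
          have hlt := label_add_ncard_lt ℓ (W := (Sum.inr '' S : Set (Fin n ⊕ Fin m))) (v := v)
            (by rintro w ⟨s, hs, rfl⟩; exact hbelow v hv s hs)
          rw [hS'card] at hlt
          rw [hq] at hqv
          omega
      refine ⟨part1, ?_⟩
      have hupos : ℓ (ℓ.symm pos) = pos := ℓ.apply_symm_apply pos
      have hu : (ℓ.symm pos) ∉ (Sum.inr '' S : Set (Fin n ⊕ Fin m)) := by
        intro hmem
        have hq2 := (part1 _).1 hmem
        rw [hupos, hq] at hq2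
        simp only [hposval] at hq2
        omega
      rcases hu3 : ℓ.symm pos with i | j
      · refine ⟨i, ?_⟩
        rw [← hu3, hupos, hposval]
      · exfalso
        have hj : j ∉ S := by
          intro hjS
          rw [hu3] at hu
          exact hu ⟨j, hjS, rfl⟩
        obtain ⟨i, hi⟩ := h2 j hj
        have hil : ¬ q (ℓ (Sum.inl i)) := fun hq2 => hinl_notmem i ((part1 _).2 hq2)
        have hjval : (ℓ (Sum.inr j) : ℕ) = n + m - k - 1 := by
          rw [← hu3, hupos, hposval]
        rw [hq] at hil
        rw [Fin.lt_def, hjval] at hi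
        omega
    · -- backward
      rintro ⟨hP, i₀, hi₀⟩
      obtain ⟨s₀, hs₀⟩ := hS
      have hhigh : ∀ s ∈ S, n + m - k ≤ (ℓ (Sum.inr s) : ℕ) := fun s hs =>
        (hP (Sum.inr s)).1 ⟨s, hs, rfl⟩
      have hlow : ∀ v, ¬ p v → (ℓ v : ℕ) < n + m - k := by
        intro v hv
        by_contra hc
        exact hv ((hP v).2 (by rw [hq]; omega))
      ext v
      simp only [peakSet, Set.mem_setOf_eq]
      rcases v with i | j
      · constructor
        · intro hpk
          exfalso
          have hlt := hpk.2 (Sum.inr s₀) (adj_lr i s₀)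
          rw [Fin.lt_def] at hlt
          have := hhigh s₀ hs₀
          have := hlow (Sum.inl i) (hinl_notmem i)
          omega
        · intro hmem
          exact absurd hmem (hinl_notmem i)
      · rw [show (Sum.inr j ∈ Sum.inr '' S) ↔ j ∈ S from
          ⟨fun ⟨s, hs, hsj⟩ => Sum.inr_injective hsj ▸ hs, fun h => ⟨j, h, rfl⟩⟩]
        rw [peak_inr j]
        constructor
        · intro hall
          by_contra hj
          have hjlow : (ℓ (Sum.inr j) : ℕ) < n + m - k :=
            hlow (Sum.inr j) (fun ⟨s, hs, hsj⟩ => hj (Sum.inr_injective hsj ▸ hs))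
          have := hall i₀
          rw [Fin.lt_def, hi₀] at this
          omega
        · intro hjS i
          rw [Fin.lt_def]
          have := hlow (Sum.inl i) (hinl_notmem i)
          have := hhigh j hjS
          omega
  -- counting
  rw [hchar, ← Nat.card_coe_set_eq]
  set E₁ := ({v : Fin n ⊕ Fin m // p v} ≃ {t : Fin (Fintype.card (Fin n ⊕ Fin m)) // q t})
    with hE₁
  set E₂ := ({v : Fin n ⊕ Fin m // ¬ p v} ≃ {t : Fin (Fintype.card (Fin n ⊕ Fin m)) // ¬ q t})
    with hE₂
  have e0 : ↥{ℓ : (Fin n ⊕ Fin m) ≃ Fin (Fintype.card (Fin n ⊕ Fin m)) |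
      (∀ v, p v ↔ q (ℓ v)) ∧ ∃ i : Fin n, (ℓ (Sum.inl i) : ℕ) = n + m - k - 1} ≃
      {x : {ℓ : (Fin n ⊕ Fin m) ≃ Fin (Fintype.card (Fin n ⊕ Fin m)) // ∀ v, p v ↔ q (ℓ v)} //
        ∃ i : Fin n, (x.1 (Sum.inl i) : ℕ) = n + m - k - 1} :=
    (Equiv.subtypeSubtypeEquivSubtypeInter _ _).symm
  have hQtrans : ∀ x : {ℓ : (Fin n ⊕ Fin m) ≃ Fin (Fintype.card (Fin n ⊕ Fin m)) //
      ∀ v, p v ↔ q (ℓ v)},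
      (∃ i : Fin n, (x.1 (Sum.inl i) : ℕ) = n + m - k - 1) ↔
      ((((equivSplit p q x).2.symm ⟨pos, hposq⟩ : {v // ¬ p v}) : Fin n ⊕ Fin m)
        ∈ Set.range Sum.inl) := by
    intro x
    have hval : ((((equivSplit p q) x).2.symm ⟨pos, hposq⟩ : {v // ¬ p v}) : Fin n ⊕ Fin m)
        = x.1.symm pos := by
      have h0 : ((equivSplit p q) x).2 = x.1.subtypeEquiv (fun a => not_congr (x.2 a)) := rfl
      rw [h0, Equiv.subtypeEquiv_symm]
      rfl
    rw [hval]
    constructor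
    · rintro ⟨i, hi⟩
      refine ⟨i, ?_⟩
      rw [Equiv.eq_symm_apply]
      apply Fin.ext
      rw [hi, hposval]
    · rintro ⟨i, hi⟩
      refine ⟨i, ?_⟩
      rw [Equiv.eq_symm_apply] at hi
      rw [hi, hposval]
  have e1 := Equiv.subtypeEquiv
    (p := fun ℓ' : {ℓ : (Fin n ⊕ Fin m) ≃ Fin (Fintype.card (Fin n ⊕ Fin m)) //
      ∀ v, p v ↔ q (ℓ v)} => ∃ i : Fin n, (ℓ'.1 (Sum.inl i) : ℕ) = n + m - k - 1)
    (q := fun y : E₁ × E₂ =>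
      (((y.2.symm ⟨pos, hposq⟩ : {v // ¬ p v}) : Fin n ⊕ Fin m) ∈ Set.range Sum.inl))
    (equivSplit p q) hQtrans
  have e2 : {y : E₁ × E₂ //
        (((y.2.symm ⟨pos, hposq⟩ : {v // ¬ p v}) : Fin n ⊕ Fin m) ∈ Set.range Sum.inl)} ≃
      E₁ × {z : E₂ //
        (((z.symm ⟨pos, hposq⟩ : {v // ¬ p v}) : Fin n ⊕ Fin m) ∈ Set.range Sum.inl)} :=
    { toFun := fun y => (y.1.1, ⟨y.1.2, y.2⟩)
      invFun := fun z => ⟨(z.1, z.2.1), z.2.2⟩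
      left_inv := fun y => rfl
      right_inv := fun z => rfl }
  have hcardP : Nat.card {v : Fin n ⊕ Fin m // p v} = k :=
    (Nat.card_coe_set_eq (Sum.inr '' S)).trans hS'card
  have hcardQ : Nat.card {t : Fin (Fintype.card (Fin n ⊕ Fin m)) // q t} = k := by
    have h := nat_card_fin_top (Fintype.card (Fin n ⊕ Fin m)) (n + m - k) (by omega)
    exact h.trans (by omega)
  have hcardnP : Nat.card {v : Fin n ⊕ Fin m // ¬ p v} = n + m - k := by
    rw [Nat.card_eq_fintype_card, Fintype.card_subtype_compl, hN,
      ← Nat.card_eq_fintype_card, hcardP]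
  have hcardnQ : Nat.card {t : Fin (Fintype.card (Fin n ⊕ Fin m)) // ¬ q t} = n + m - k :=
    nat_card_fin_bot (Fintype.card (Fin n ⊕ Fin m)) (n + m - k) (by omega)
  have hE1card : Nat.card E₁ = k.factorial := by
    rw [hE₁, nat_card_equiv (hcardP.trans hcardQ.symm), hcardP]
  have hrange : Nat.card {b : {v : Fin n ⊕ Fin m // ¬ p v} //
      (b : Fin n ⊕ Fin m) ∈ Set.range Sum.inl} = n := by
    have e : Fin n ≃ {b : {v : Fin n ⊕ Fin m // ¬ p v} //
        (b : Fin n ⊕ Fin m) ∈ Set.range Sum.inl} :=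
      Equiv.ofBijective (fun i => ⟨⟨Sum.inl i, hinl_notmem i⟩, ⟨i, rfl⟩⟩)
        ⟨fun a b hab => by
            have := congrArg (fun y => y.1.1) hab
            simpa using this,
         by rintro ⟨⟨v, hv⟩, ⟨i, hi⟩⟩
            exact ⟨i, by apply Subtype.ext; apply Subtype.ext; exact hi⟩⟩
    rw [Nat.card_congr e.symm, Nat.card_eq_fintype_card, Fintype.card_fin]
  have eflip : {z : E₂ //
        (((z.symm ⟨pos, hposq⟩ : {v // ¬ p v}) : Fin n ⊕ Fin m) ∈ Set.range Sum.inl)} ≃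
      {f : {t : Fin (Fintype.card (Fin n ⊕ Fin m)) // ¬ q t} ≃ {v : Fin n ⊕ Fin m // ¬ p v} //
        ((f ⟨pos, hposq⟩ : {v // ¬ p v}) : Fin n ⊕ Fin m) ∈ Set.range Sum.inl} :=
    { toFun := fun z => ⟨z.1.symm, z.2⟩
      invFun := fun f => ⟨f.1.symm, by simpa using f.2⟩
      left_inv := fun z => by apply Subtype.ext; simp
      right_inv := fun f => by apply Subtype.ext; simp }
  have hc2 : Nat.card {f : {t : Fin (Fintype.card (Fin n ⊕ Fin m)) // ¬ q t} ≃
        {v : Fin n ⊕ Fin m // ¬ p v} //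
        ((f ⟨pos, hposq⟩ : {v // ¬ p v}) : Fin n ⊕ Fin m) ∈ Set.range Sum.inl} =
      n * (n + m - k - 1).factorial := by
    have h := nat_card_equiv_subtype (hcardnQ.trans hcardnP.symm)
      (⟨pos, hposq⟩ : {t : Fin (Fintype.card (Fin n ⊕ Fin m)) // ¬ q t})
      (fun b : {v : Fin n ⊕ Fin m // ¬ p v} => (b : Fin n ⊕ Fin m) ∈ Set.range Sum.inl)
    rw [hcardnQ, hrange] at h
    exact h
  calc Nat.card ↥{ℓ : (Fin n ⊕ Fin m) ≃ Fin (Fintype.card (Fin n ⊕ Fin m)) |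
      (∀ v, p v ↔ q (ℓ v)) ∧ ∃ i : Fin n, (ℓ (Sum.inl i) : ℕ) = n + m - k - 1}
      = Nat.card E₁ * Nat.card {z : E₂ //
        (((z.symm ⟨pos, hposq⟩ : {v // ¬ p v}) : Fin n ⊕ Fin m) ∈ Set.range Sum.inl)} := by
        rw [Nat.card_congr ((e0.trans e1).trans e2), Nat.card_prod]
    _ = k.factorial * (n * (n + m - k - 1).factorial) := by
        rw [hE1card, Nat.card_congr eflip, hc2]
    _ = k.factorial * n * (n + m - k - 1).factorial := (mul_assoc _ _ _).symm
end
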